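/- arXiv:1312.6620 — 8 statements merged into one kernel-verified Lean document; each statement's English description precedes it below -/
import Mathlib

section
/- Let K be a number field, ℓ a prime number, and let a ∈ K^× not be a root of unity. Then there exist a nonnegative integer d, an element A ∈ K^× that is strongly ℓ-indivisible, and a root of unity ζ ∈ K of ℓ-power order, such that a = A^{ℓ^d}·ζ. Moreover the integer d is uniquely determined by K, ℓ and a. -/
open NumberField IsDedekindDomain IntermediateField

set_option synthInstance.maxHeartbeats 1000000
set_option maxHeartbeats 1000000

noncomputable section

/-- A fixed algebraic closure of `K`. -/
abbrev Kbar (K : Type) [Field K] := AlgebraicClosure K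

/-- The cyclotomic extension `K(ζ_m)` of `K` inside `Kbar K`,
obtained by adjoining all `m`-th roots of unity. -/
def cyclo (K : Type) [Field K] (m : ℕ) : IntermediateField K (Kbar K) :=
  IntermediateField.adjoin K {x : Kbar K | x ^ m = 1}

/-- The field `K(ζ_m)(n-th roots of G)`: the smallest extension of `K` inside `Kbar K`
containing all `m`-th roots of unity and all `n`-th roots of every element of `G`. -/
def cycloKummer (K : Type) [Field K] (G : Subgroup Kˣ) (m n : ℕ) :
    IntermediateField K (Kbar K) :=
  IntermediateField.adjoin K
    ({x : Kbar K | x ^ m = 1} ∪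
      {x : Kbar K | ∃ g ∈ G, x ^ n = algebraMap K (Kbar K) (g : K)})

/-- A prime `v` of `K` is good for `G` if every element of `G` is a `v`-adic unit,
i.e. the reduction of `G` modulo `v` is well-defined and does not contain `0`. -/
def GoodPrime (K : Type) [Field K] [NumberField K] (G : Subgroup Kˣ)
    (v : HeightOneSpectrum (𝓞 K)) : Prop :=
  ∀ g ∈ G, ∃ a b : 𝓞 K, a ∉ v.asIdeal ∧ b ∉ v.asIdeal ∧
    (g : K) * algebraMap (𝓞 K) K b = algebraMap (𝓞 K) K a

/-- The reduction of `G` modulo `v`, as a subset of the residue field at `v`. -/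
def reductionSet (K : Type) [Field K] [NumberField K] (G : Subgroup Kˣ)
    (v : HeightOneSpectrum (𝓞 K)) : Set ((𝓞 K) ⧸ v.asIdeal) :=
  {y | ∃ g ∈ G, ∃ a b : 𝓞 K, b ∉ v.asIdeal ∧
    (g : K) * algebraMap (𝓞 K) K b = algebraMap (𝓞 K) K a ∧
    y * Ideal.Quotient.mk v.asIdeal b = Ideal.Quotient.mk v.asIdeal a}

/-- The set `S` of primes of `K` has natural density `dens`. -/
def HasDensity (K : Type) [Field K] [NumberField K]
    (S : Set (HeightOneSpectrum (𝓞 K))) (dens : ℝ) : Prop :=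
  Filter.Tendsto (fun N : ℕ =>
      (Nat.card {v : HeightOneSpectrum (𝓞 K) //
          v ∈ S ∧ Nat.card ((𝓞 K) ⧸ v.asIdeal) ≤ N} : ℝ) /
      (Nat.card {v : HeightOneSpectrum (𝓞 K) //
          Nat.card ((𝓞 K) ⧸ v.asIdeal) ≤ N} : ℝ))
    Filter.atTop (nhds dens)

/-- The set of (good) primes of `K` such that the reduction of `G` has size coprime to `ℓ`. -/
def CoprimeRed (K : Type) [Field K] [NumberField K] (ℓ : ℕ) (G : Subgroup Kˣ) :
    Set (HeightOneSpectrum (𝓞 K)) :=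
  {v | GoodPrime K G v ∧ ¬ ℓ ∣ Nat.card (reductionSet K G v)}

/-- `a ∈ Lˣ` is strongly `ℓ`-indivisible: there is no root of unity `ζ ∈ L` of
`ℓ`-power order such that `aζ` is an `ℓ`-th power in `Lˣ`. -/
def StronglyIndiv (L : Type) [Field L] (ℓ : ℕ) (a : Lˣ) : Prop :=
  ¬ ∃ (ζ b : Lˣ) (k : ℕ), ζ ^ ℓ ^ k = 1 ∧ a * ζ = b ^ ℓ

/-- `B 0, …, B (r-1)` are strongly `ℓ`-independent elements of `Lˣ`. -/
def StronglyIndep (L : Type) [Field L] (ℓ : ℕ) {r : ℕ} (B : Fin r → Lˣ) : Prop :=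
  ∀ x : Fin r → ℤ, (∃ i, ¬ (ℓ : ℤ) ∣ x i) → StronglyIndiv L ℓ (∏ i, B i ^ x i)

/-- The tuple `(d, h)` expresses the `ℓ`-divisibility of `G` in `K`. -/
def ExpressesDiv (K : Type) [Field K] (ℓ : ℕ) (G : Subgroup Kˣ) {r : ℕ}
    (d h : Fin r → ℕ) : Prop :=
  ∃ B ζ : Fin r → Kˣ, StronglyIndep K ℓ B ∧ (∀ i, orderOf (ζ i) = ℓ ^ h i) ∧
    G = Subgroup.closure (Set.range fun i => B i ^ ℓ ^ d i * ζ i)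

end

/-! The exponents `d` for which `a = A ^ ℓ ^ d * ζ` with `ζ` of `ℓ`-power order form a set of
naturals containing `0`, and `A` is strongly indivisible exactly when `d` is the largest of
them; so `d` exists and is unique as soon as that set is bounded. A homomorphism `f : Kˣ → ℤ`
kills roots of unity, so `ℓ ^ d ∣ f a`, which bounds `d` once `f a ≠ 0`. If some valuation of `a`
is nonzero it serves as `f`. Otherwise `a` is a unit of `𝓞 K`, and so are `A` and `ζ`, since
`𝓞 K` is integrally closed; then a coordinate of `a` in the free group `(𝓞 K)ˣ / torsion`
(Dirichlet's unit theorem) serves. -/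

section PrimaryPowers

variable {G : Type*} [CommGroup G] {ℓ d e : ℕ} {a : G}

def IsPowModPrimaryTorsion (ℓ d : ℕ) (a : G) : Prop :=
  ∃ (A ζ : G) (k : ℕ), ζ ^ ℓ ^ k = 1 ∧ a = A ^ ℓ ^ d * ζ

theorem isPowModPrimaryTorsion_zero (ℓ : ℕ) (a : G) : IsPowModPrimaryTorsion ℓ 0 a :=
  ⟨a, 1, 0, one_pow _, by simp⟩

theorem mul_pow_pow_eq_one {x y : G} {m n : ℕ} (hx : x ^ ℓ ^ m = 1) (hy : y ^ ℓ ^ n = 1) :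
    (x * y) ^ ℓ ^ (m + n) = 1 := by
  rw [mul_pow, pow_add, pow_mul, hx, one_pow, one_mul, mul_comm, pow_mul, hy, one_pow]

theorem IsPowModPrimaryTorsion.mono (h : IsPowModPrimaryTorsion ℓ d a) (hed : e ≤ d) :
    IsPowModPrimaryTorsion ℓ e a := by
  obtain ⟨A, ζ, k, hζ, rfl⟩ := h
  refine ⟨A ^ ℓ ^ (d - e), ζ, k, hζ, ?_⟩
  rw [← pow_mul, ← pow_add, Nat.sub_add_cancel hed]

theorem IsPowModPrimaryTorsion.pow_pow_mul {A ζ : G} {k : ℕ} (hA : IsPowModPrimaryTorsion ℓ e A)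
    (hζ : ζ ^ ℓ ^ k = 1) : IsPowModPrimaryTorsion ℓ (d + e) (A ^ ℓ ^ d * ζ) := by
  obtain ⟨B, ξ, j, hξ, rfl⟩ := hA
  have hξd : (ξ ^ ℓ ^ d) ^ ℓ ^ j = 1 := by rw [← pow_mul, mul_comm, pow_mul, hξ, one_pow]
  refine ⟨B, ξ ^ ℓ ^ d * ζ, j + k, mul_pow_pow_eq_one hξd hζ, ?_⟩
  rw [mul_pow, ← pow_mul, ← pow_add, add_comm e, mul_assoc]

theorem isPowModPrimaryTorsion_of_pow_mul_eq {A₁ A₂ ζ₁ ζ₂ : G} {k₁ k₂ : ℕ}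
    (hζ₁ : ζ₁ ^ ℓ ^ k₁ = 1) (hζ₂ : ζ₂ ^ ℓ ^ k₂ = 1)
    (h : A₁ ^ ℓ ^ d * ζ₁ = A₂ ^ ℓ ^ (d + e) * ζ₂) : IsPowModPrimaryTorsion ℓ e A₁ := by
  set ξ := A₁ * (A₂ ^ ℓ ^ e)⁻¹
  have hξ : ξ ^ ℓ ^ d = ζ₂ * ζ₁⁻¹ := by
    rw [mul_pow, inv_pow, ← pow_mul, ← pow_add, add_comm e, mul_inv_eq_iff_eq_mul,
      mul_right_comm, mul_comm ζ₂, ← h, mul_inv_cancel_right]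
  have hζ₁' : ζ₁⁻¹ ^ ℓ ^ k₁ = 1 := by rw [inv_pow, hζ₁, inv_one]
  refine ⟨A₂, ξ, d + (k₂ + k₁), ?_, by rw [mul_inv_cancel_comm_assoc]⟩
  rw [pow_add, pow_mul, hξ, mul_pow_pow_eq_one hζ₂ hζ₁']

theorem isGreatest_setOf_isPowModPrimaryTorsion_iff :
    IsGreatest {e | IsPowModPrimaryTorsion ℓ e a} d ↔
      ∃ (A ζ : G) (k : ℕ), ¬ IsPowModPrimaryTorsion ℓ 1 A ∧ ζ ^ ℓ ^ k = 1 ∧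
        a = A ^ ℓ ^ d * ζ := by
  constructor
  · rintro ⟨⟨A, ζ, k, hζ, rfl⟩, hmax⟩
    refine ⟨A, ζ, k, fun hA => ?_, hζ, rfl⟩
    have := hmax (hA.pow_pow_mul hζ)
    omega
  · rintro ⟨A, ζ, k, hA, hζ, rfl⟩
    refine ⟨⟨A, ζ, k, hζ, rfl⟩, fun e ⟨B, ξ, j, hξ, hB⟩ => ?_⟩
    by_contra! hlt
    obtain ⟨c, rfl⟩ := Nat.exists_eq_add_of_le hlt.le
    exact hA ((isPowModPrimaryTorsion_of_pow_mul_eq hζ hξ hB).mono (by omega))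

theorem existsUnique_pow_mul_of_bddAbove (hbdd : BddAbove {d | IsPowModPrimaryTorsion ℓ d a}) :
    ∃! d, ∃ (A ζ : G) (k : ℕ), ¬ IsPowModPrimaryTorsion ℓ 1 A ∧ ζ ^ ℓ ^ k = 1 ∧
      a = A ^ ℓ ^ d * ζ := by
  simp only [← isGreatest_setOf_isPowModPrimaryTorsion_iff]
  obtain ⟨d, hd⟩ := hbdd.exists_isGreatest_of_nonempty ⟨0, isPowModPrimaryTorsion_zero ℓ a⟩
  exact ⟨d, hd, fun _ he => he.unique hd⟩

theorem IsPowModPrimaryTorsion.pow_dvd_toAdd (hℓ : ℓ ≠ 0) (f : G →* Multiplicative ℤ)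
    (h : IsPowModPrimaryTorsion ℓ d a) : (ℓ : ℤ) ^ d ∣ (f a).toAdd := by
  obtain ⟨A, ζ, k, hζ, rfl⟩ := h
  have hfζ : (f ζ).toAdd = 0 := by
    have := congrArg Multiplicative.toAdd (congrArg f hζ)
    simp only [map_pow, toAdd_pow, map_one, toAdd_one, smul_eq_zero] at this
    exact this.resolve_left (pow_ne_zero k hℓ)
  refine ⟨(f A).toAdd, ?_⟩
  simp [hfζ]

theorem bddAbove_setOf_isPowModPrimaryTorsion_of_map_ne_one (hℓ : 1 < ℓ)
    (f : G →* Multiplicative ℤ) (hfa : f a ≠ 1) :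
    BddAbove {d | IsPowModPrimaryTorsion ℓ d a} := by
  refine ⟨(f a).toAdd.natAbs, fun d hd => ?_⟩
  have hdvd := Int.natAbs_dvd_natAbs.mpr (hd.pow_dvd_toAdd (by omega) f)
  rw [Int.natAbs_pow, Int.natAbs_natCast] at hdvd
  exact (Nat.lt_pow_self hℓ).le.trans (Nat.le_of_dvd (Int.natAbs_pos.mpr hfa) hdvd)

theorem IsPowModPrimaryTorsion.of_map {H : Type*} [CommGroup H] {φ : H →* G}
    (hφ : Function.Injective φ) (hsat : φ.range.PowSaturated) (hℓ : ℓ ≠ 0) {u : H}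
    (h : IsPowModPrimaryTorsion ℓ d (φ u)) : IsPowModPrimaryTorsion ℓ d u := by
  obtain ⟨A, ζ, k, hζ, hu⟩ := h
  obtain ⟨ξ, rfl⟩ := (hsat (hζ ▸ one_mem _)).resolve_left (pow_ne_zero k hℓ)
  have hA : A ^ ℓ ^ d ∈ φ.range := ⟨u * ξ⁻¹, by rw [map_mul, map_inv, hu, mul_inv_cancel_right]⟩
  obtain ⟨B, rfl⟩ := (hsat hA).resolve_left (pow_ne_zero d hℓ)
  exact ⟨B, ξ, k, hφ (by rwa [map_pow, map_one]), hφ (by rwa [map_mul, map_pow])⟩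

end PrimaryPowers

section UnitsOfIntegers

variable {R K : Type*} [CommRing R] [Field K] [Algebra R K] [IsFractionRing R K]

theorem powSaturated_range_unitsMap_algebraMap [IsIntegrallyClosed R] :
    (Units.map (algebraMap R K : R →* K)).range.PowSaturated := by
  intro n x ⟨u, hu⟩
  rcases n.eq_zero_or_pos with hn | hn
  · exact .inl hn
  have hx : IsIntegral R (x : K) := by
    refine IsIntegral.of_pow hn ?_
    rw [← Units.val_pow_eq_pow_val, ← hu]
    exact isIntegral_algebraMap
  obtain ⟨y, hy⟩ := IsIntegrallyClosed.isIntegral_iff.mp hx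
  have hyu : y ^ n = u := IsFractionRing.injective R K <| by
    rw [map_pow, hy, ← Units.val_pow_eq_pow_val, ← hu]
    rfl
  have hunit : IsUnit y := (isUnit_pow_iff hn.ne').mp (hyu ▸ u.isUnit)
  exact .inr ⟨hunit.unit, Units.ext hy⟩

theorem mem_range_unitsMap_algebraMap_of_valuation_eq_one [IsDedekindDomain R] {x : Kˣ}
    (h : ∀ v : HeightOneSpectrum R, v.valuation K x = 1) :
    x ∈ (Units.map (algebraMap R K : R →* K)).range := by
  have hinv : ∀ v : HeightOneSpectrum R, v.valuation K (x⁻¹ : Kˣ) = 1 := fun v => by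
    rw [Units.val_inv_eq_inv_val, map_inv₀, h v, inv_one]
  obtain ⟨r, hr⟩ := HeightOneSpectrum.mem_integers_of_valuation_le_one K _ (fun v => (h v).le)
  obtain ⟨s, hs⟩ :=
    HeightOneSpectrum.mem_integers_of_valuation_le_one K _ (fun v => (hinv v).le)
  have hrs : r * s = 1 := IsFractionRing.injective R K <| by
    rw [map_mul, hr, hs, Units.mul_inv, map_one]
  exact ⟨⟨r, s, hrs, mul_comm s r ▸ hrs⟩, Units.ext hr⟩

end UnitsOfIntegers

theorem exists_monoidHom_ne_one_of_notMem {G : Type*} [CommGroup G] {T : Subgroup G}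
    [Module.Free ℤ (Additive (G ⧸ T))] {g : G} (hg : g ∉ T) :
    ∃ f : G →* Multiplicative ℤ, f g ≠ 1 := by
  have hne : Additive.ofMul (g : G ⧸ T) ≠ 0 := fun h =>
    hg ((QuotientGroup.eq_one_iff g).mp (Additive.ofMul.injective h))
  obtain ⟨φ, hφ⟩ := Module.Projective.exists_dual_ne_zero ℤ hne
  exact ⟨(AddMonoidHom.toMultiplicativeRight φ.toAddMonoidHom).comp (QuotientGroup.mk' T), hφ⟩

theorem bddAbove_setOf_isPowModPrimaryTorsion (K : Type*) [Field K] [NumberField K] {ℓ : ℕ}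
    (hℓ : 1 < ℓ) {a : Kˣ} (ha : ¬ IsOfFinOrder a) :
    BddAbove {d | IsPowModPrimaryTorsion ℓ d a} := by
  by_cases hval : ∃ v : HeightOneSpectrum (𝓞 K), v.valuation K a ≠ 1
  · obtain ⟨v, hv⟩ := hval
    refine bddAbove_setOf_isPowModPrimaryTorsion_of_map_ne_one hℓ
      (WithZero.unitsWithZeroEquiv.toMonoidHom.comp (Units.map (v.valuation K))) ?_
    rwa [MonoidHom.comp_apply, MulEquiv.coe_toMonoidHom, ne_eq, MulEquiv.map_eq_one_iff,
      Units.ext_iff, Units.coe_map, Units.val_one]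
  · push Not at hval
    obtain ⟨u, rfl⟩ := mem_range_unitsMap_algebraMap_of_valuation_eq_one hval
    obtain ⟨f, hf⟩ := exists_monoidHom_ne_one_of_notMem (T := Units.torsion K) (g := u)
      fun hu => ha (MonoidHom.isOfFinOrder _ hu)
    exact (bddAbove_setOf_isPowModPrimaryTorsion_of_map_ne_one hℓ f hf).mono fun d hd =>
      hd.of_map (Units.map_injective (IsFractionRing.injective (𝓞 K) K))
        powSaturated_range_unitsMap_algebraMap (by omega)

theorem stronglyIndiv_iff_not_isPowModPrimaryTorsion_one {L : Type} [Field L] {ℓ : ℕ}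
    {A : Lˣ} : StronglyIndiv L ℓ A ↔ ¬ IsPowModPrimaryTorsion ℓ 1 A :=
  not_congr
    ⟨fun ⟨ζ, b, k, hζ, h⟩ =>
      ⟨b, ζ⁻¹, k, by rw [inv_pow, hζ, inv_one], by rw [pow_one, ← h, mul_inv_cancel_right]⟩,
    fun ⟨B, ξ, k, hξ, h⟩ =>
      ⟨ξ⁻¹, B, k, by rw [inv_pow, hξ, inv_one], by rw [h, pow_one, mul_inv_cancel_right]⟩⟩

/-- every `a ∈ Kˣ` that is not a root of unity can be written as
`a = A ^ ℓ ^ d * ζ` with `A` strongly `ℓ`-indivisible and `ζ ∈ K` a root of unity of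
`ℓ`-power order; the integer `d` is uniquely determined. -/
theorem stmt6 (K : Type) [Field K] [NumberField K] (ℓ : ℕ) (hℓ : ℓ.Prime)
    (a : Kˣ) (ha : ¬ IsOfFinOrder a) :
    ∃! d : ℕ, ∃ (A ζ : Kˣ) (k : ℕ),
      StronglyIndiv K ℓ A ∧ ζ ^ ℓ ^ k = 1 ∧ a = A ^ ℓ ^ d * ζ := by
  simpa only [stronglyIndiv_iff_not_isPowModPrimaryTorsion_one] using
    existsUnique_pow_mul_of_bddAbove (bddAbove_setOf_isPowModPrimaryTorsion K hℓ.one_lt ha)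
end

section
/- (Schinzel) Let K be a number field and ℓ a prime number such that K does not contain a primitive ℓ-th root of unity. If a ∈ K^× is strongly ℓ-indivisible, then the extension K(ζ_ℓ, ℓ-th root of a)/K is not abelian (i.e. it is Galois with non-abelian Galois group, or not Galois). -/
/-!
The field `E = K(ζ_ℓ, a^{1/ℓ})` contains a primitive `ℓ`-th root of unity `ζ`, which is not in `K`,
so some `σ ∈ Gal(E/K)` moves it. Then `x ↦ σ x / x` is injective, hence bijective, on `μ_ℓ`,
so some `ℓ`-th root `β` of `a` is fixed by `σ`. For any other `τ`, `τ β / β` is an `ℓ`-th root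
of unity which, since `σ` and `τ` commute, is also fixed by `σ`; so it is `1`. Thus `β` is fixed
by the whole Galois group, i.e. `β ∈ K`, and `a = β ^ ℓ` is an `ℓ`-th power in `K`.
-/

open NumberField IsDedekindDomain IntermediateField

set_option synthInstance.maxHeartbeats 1000000
set_option maxHeartbeats 1000000

open Polynomial

namespace IsPrimitiveRoot

variable {E F : Type*} [Field E] [FunLike F E E] [MonoidWithZeroHomClass F E E]
  {ℓ : ℕ} {ζ : E} (hζ : IsPrimitiveRoot ζ ℓ) (hℓ : ℓ.Prime) {σ : F} (hσζ : σ ζ ≠ ζ)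
include hζ hℓ hσζ

/-- Every `ℓ`-th root of unity `≠ 1` generates `ζ`, so it cannot be fixed by `σ`. -/
theorem eq_one_of_map_eq_self {x : E} (hx : x ^ ℓ = 1) (hσx : σ x = x) : x = 1 := by
  have : NeZero ℓ := ⟨hℓ.ne_zero⟩
  by_contra hx1
  have hxprim := isPrimitiveRoot_of_mem_nthRootsFinset hℓ
    ((Polynomial.mem_nthRootsFinset hℓ.pos 1).2 hx) hx1
  obtain ⟨k, -, rfl⟩ := hxprim.eq_pow_of_pow_eq_one hζ.pow_eq_one
  exact hσζ (by rw [map_pow, hσx])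

theorem map_eq_self_of_map_comm {τ : F} {β : E} (hβ : β ≠ 0) (hτβ : τ (β ^ ℓ) = β ^ ℓ)
    (hσβ : σ β = β) (hστ : σ (τ β) = τ (σ β)) : τ β = β := by
  have hx : (τ β / β) ^ ℓ = 1 := by
    rw [div_pow, ← map_pow, hτβ, div_self (pow_ne_zero _ hβ)]
  have hσx : σ (τ β / β) = τ β / β := by rw [map_div₀, hστ, hσβ]
  exact (div_eq_one_iff_eq hβ).1 (hζ.eq_one_of_map_eq_self hℓ hσζ hx hσx)

theorem exists_map_mul_eq_self {α : E} (hα : α ≠ 0) (hσα : σ (α ^ ℓ) = α ^ ℓ) :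
    ∃ x : E, x ^ ℓ = 1 ∧ σ (x * α) = x * α := by
  set μ := nthRootsFinset ℓ (1 : E)
  have hmem {x : E} : x ∈ μ ↔ x ^ ℓ = 1 := Polynomial.mem_nthRootsFinset hℓ.pos 1
  have hne {x : E} (hx : x ^ ℓ = 1) : x ≠ 0 := by rintro rfl; simp [hℓ.ne_zero] at hx
  have hdiv {x y : E} (hy : y ≠ 0) (hxy : x ^ ℓ = y ^ ℓ) : (x / y) ^ ℓ = 1 := by
    rw [div_pow, hxy, div_self (pow_ne_zero _ hy)]
  have hmaps : Set.MapsTo (fun x => σ x / x) μ μ := fun x hx => by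
    rw [Finset.mem_coe, hmem] at hx ⊢
    exact hdiv (hne hx) (by rw [← map_pow, hx, map_one])
  have hinj : Set.InjOn (fun x => σ x / x) μ := fun x hx y hy hxy => by
    rw [Finset.mem_coe, hmem] at hx hy
    have hσy : σ y ^ ℓ = 1 := by rw [← map_pow, hy, map_one]
    have hσxy : σ (x / y) = x / y := by
      rw [div_eq_div_iff (hne hx) (hne hy)] at hxy
      rw [map_div₀, div_eq_div_iff (hne hσy) (hne hy)]
      linear_combination hxy
    exact (div_eq_one_iff_eq (hne hy)).1
      (hζ.eq_one_of_map_eq_self hℓ hσζ (hdiv (hne hy) (by rw [hx, hy])) hσxy)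
  have hσα0 : σ α ≠ 0 := fun h => hα (pow_eq_zero_iff hℓ.ne_zero |>.1 (by
    rw [← hσα, map_pow, h, zero_pow hℓ.ne_zero]))
  obtain ⟨x, hx, hσx⟩ := Finset.surjOn_of_injOn_of_card_le _ hmaps hinj le_rfl
    (hmem.2 (hdiv (x := α) hσα0 (by rw [← map_pow, hσα])))
  refine ⟨x, hmem.1 hx, ?_⟩
  rw [div_eq_div_iff (hne (hmem.1 hx)) hσα0] at hσx
  rw [map_mul]
  linear_combination hσx

end IsPrimitiveRoot

theorem exists_pow_eq_of_isGalois_of_commute {K E : Type*} [Field K] [Field E] [Algebra K E]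
    [IsGalois K E] (hcomm : ∀ σ τ : Gal(E/K), σ * τ = τ * σ) {ℓ : ℕ} (hℓ : ℓ.Prime) {ζ : E}
    (hζ : IsPrimitiveRoot ζ ℓ) (hζK : ζ ∉ Set.range (algebraMap K E)) {a : K} (ha : a ≠ 0)
    {α : E} (hα : α ^ ℓ = algebraMap K E a) : ∃ b : K, b ^ ℓ = a := by
  obtain ⟨σ, hσζ⟩ : ∃ σ : Gal(E/K), σ ζ ≠ ζ :=
    not_forall.1 (mt (InfiniteGalois.mem_range_algebraMap_iff_fixed ζ).2 hζK)
  have hα0 : α ≠ 0 := by rintro rfl; exact ha (by simpa [hℓ.ne_zero] using hα.symm)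
  obtain ⟨x, hx, hσβ⟩ := hζ.exists_map_mul_eq_self hℓ hσζ hα0 (by rw [hα, AlgEquiv.commutes])
  have hβ : (x * α) ^ ℓ = algebraMap K E a := by rw [mul_pow, hx, one_mul, hα]
  have hβ0 : x * α ≠ 0 := by rintro h; exact ha (by simpa [h, hℓ.ne_zero] using hβ.symm)
  have hfix (τ : Gal(E/K)) : τ (x * α) = x * α :=
    hζ.map_eq_self_of_map_comm hℓ hσζ hβ0 (by rw [hβ, AlgEquiv.commutes]) hσβ
      (by rw [← AlgEquiv.mul_apply, hcomm, AlgEquiv.mul_apply])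
  obtain ⟨b, hb⟩ := (InfiniteGalois.mem_range_algebraMap_iff_fixed _).2 hfix
  exact ⟨b, (algebraMap K E).injective (by rw [map_pow, hb, hβ])⟩

/-- Schinzel: if `ζ_ℓ ∉ K` and `a ∈ Kˣ` is strongly `ℓ`-indivisible, then
the extension `K(ζ_ℓ, ℓ-th root of a)/K` is not abelian (i.e. it is not both Galois and
with commutative Galois group). -/
theorem stmt7 (K : Type) [Field K] [NumberField K] (ℓ : ℕ) (hℓ : ℓ.Prime)
    (hK : ¬ ∃ ζ : K, IsPrimitiveRoot ζ ℓ)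
    (a : Kˣ) (ha : StronglyIndiv K ℓ a) :
    ¬ (IsGalois K ↥(IntermediateField.adjoin K
          ({x : Kbar K | x ^ ℓ = 1} ∪
            {x : Kbar K | x ^ ℓ = algebraMap K (Kbar K) (a : K)})) ∧
        ∀ σ τ : ↥(IntermediateField.adjoin K
          ({x : Kbar K | x ^ ℓ = 1} ∪
            {x : Kbar K | x ^ ℓ = algebraMap K (Kbar K) (a : K)})) ≃ₐ[K]
          ↥(IntermediateField.adjoin K
          ({x : Kbar K | x ^ ℓ = 1} ∪
            {x : Kbar K | x ^ ℓ = algebraMap K (Kbar K) (a : K)})),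
          σ * τ = τ * σ) := by
  rintro ⟨hGal, hcomm⟩
  set E := IntermediateField.adjoin K
    ({x : Kbar K | x ^ ℓ = 1} ∪ {x : Kbar K | x ^ ℓ = algebraMap K (Kbar K) (a : K)})
  have : NeZero (ℓ : K) := ⟨Nat.cast_ne_zero.2 hℓ.ne_zero⟩
  obtain ⟨ζ, hζ⟩ := HasEnoughRootsOfUnity.exists_primitiveRoot (Kbar K) ℓ
  obtain ⟨α, hα⟩ := IsAlgClosed.exists_pow_nat_eq (algebraMap K (Kbar K) a) hℓ.pos
  have hζE : IsPrimitiveRoot (⟨ζ, subset_adjoin K _ (Or.inl hζ.pow_eq_one)⟩ : E) ℓ :=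
    hζ.of_map_of_injective (f := E.val) Subtype.val_injective
  obtain ⟨b, hb⟩ := exists_pow_eq_of_isGalois_of_commute hcomm hℓ hζE
    (fun ⟨z, hz⟩ => hK ⟨z, (IsPrimitiveRoot.map_iff_of_injective (algebraMap K E).injective).1
      (hz ▸ hζE)⟩)
    a.ne_zero (α := ⟨α, subset_adjoin K _ (Or.inr hα)⟩) (Subtype.ext hα)
  exact ha ⟨1, Units.mk0 b (by rintro rfl; simp [hℓ.ne_zero, eq_comm] at hb), 0, one_pow _,
    Units.ext (by simp [hb])⟩
end

section
/- Let K be a number field and ℓ a prime number; assume that ℓ is odd or that a primitive 4th root of unity lies in K. Let a_1,…,a_r be strongly ℓ-independent elements of K^×, let x_1,…,x_r be integers and n ≥ 0 an integer. If the product a_1^{x_1}⋯a_r^{x_r} is an ℓ^n-th power in K^×, then each x_i is divisible by ℓ^n. -/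
open NumberField IsDedekindDomain IntermediateField

set_option synthInstance.maxHeartbeats 1000000
set_option maxHeartbeats 1000000

/-!
Induction on `n`, carrying along a root of unity of `ℓ`-power order. If `ζ · ∏ aᵢ^{xᵢ}` is an
`ℓ^{n+1}`-th power `b^{ℓ^{n+1}}`, strong independence forces `xᵢ = ℓ yᵢ`; then
`η = b^{ℓ^n} / ∏ aᵢ^{yᵢ}` satisfies `η^ℓ = ζ`, so it is again a root of unity of `ℓ`-power order,
and `η · ∏ aᵢ^{yᵢ} = b^{ℓ^n}` is the same situation one level down.
-/

namespace StronglyIndep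

variable {L : Type} [Field L] {ℓ : ℕ} {r : ℕ} {a : Fin r → Lˣ}

theorem dvd_of_mul_eq_pow (ha : StronglyIndep L ℓ a) {x : Fin r → ℤ} {ζ c : Lˣ} {k : ℕ}
    (hζ : ζ ^ ℓ ^ k = 1) (hc : c ^ ℓ = ζ * ∏ i, a i ^ x i) (i : Fin r) : (ℓ : ℤ) ∣ x i := by
  by_contra hi
  exact ha x ⟨i, hi⟩ ⟨ζ, c, k, hζ, by rw [hc, mul_comm]⟩

theorem pow_dvd_of_mul_eq_pow (ha : StronglyIndep L ℓ a) (n : ℕ) {x : Fin r → ℤ} {ζ b : Lˣ}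
    {k : ℕ} (hζ : ζ ^ ℓ ^ k = 1) (hb : b ^ ℓ ^ n = ζ * ∏ i, a i ^ x i) (i : Fin r) :
    (ℓ : ℤ) ^ n ∣ x i := by
  induction n generalizing x ζ b k with
  | zero => simp
  | succ n ih =>
    have hc : (b ^ ℓ ^ n) ^ ℓ = ζ * ∏ i, a i ^ x i := by rw [← pow_mul, ← pow_succ, hb]
    choose y hy using ha.dvd_of_mul_eq_pow hζ hc
    set P := ∏ i, a i ^ y i
    have hP : ∏ i, a i ^ x i = P ^ ℓ := by
      rw [← Finset.prod_pow]
      exact Finset.prod_congr rfl fun i _ => by rw [hy i, ← zpow_natCast, ← zpow_mul, mul_comm]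
    set η := b ^ ℓ ^ n * P⁻¹
    have hη : η ^ ℓ = ζ := by
      rw [mul_pow, hc, hP, inv_pow, mul_inv_cancel_right]
    have hηk : η ^ ℓ ^ (k + 1) = 1 := by rw [pow_succ', pow_mul, hη, hζ]
    rw [hy i, pow_succ']
    exact mul_dvd_mul_left _ (ih hηk (inv_mul_cancel_right _ P).symm)

end StronglyIndep

theorem stmt9_general (K : Type) [Field K] (ℓ : ℕ)
    (r : ℕ) (a : Fin r → Kˣ) (ha : StronglyIndep K ℓ a)
    (x : Fin r → ℤ) (n : ℕ)
    (hpow : ∃ b : Kˣ, b ^ ℓ ^ n = ∏ i, a i ^ x i) :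
    ∀ i, (ℓ : ℤ) ^ n ∣ x i := by
  obtain ⟨b, hb⟩ := hpow
  exact ha.pow_dvd_of_mul_eq_pow n (ζ := 1) (k := 0) (one_pow _) (by rw [one_mul, hb])

/-- if `ℓ` is odd or `ζ_4 ∈ K`, and `a 0, …, a (r-1)` are strongly
`ℓ`-independent elements of `Kˣ`, then `∏ a i ^ x i` being an `ℓ^n`-th power in `Kˣ`
forces `ℓ^n ∣ x i` for every `i`. -/
theorem stmt9 (K : Type) [Field K] [NumberField K] (ℓ : ℕ) (hℓ : ℓ.Prime)
    (hcase : Odd ℓ ∨ ∃ ζ : K, IsPrimitiveRoot ζ 4)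
    (r : ℕ) (a : Fin r → Kˣ) (ha : StronglyIndep K ℓ a)
    (x : Fin r → ℤ) (n : ℕ)
    (hpow : ∃ b : Kˣ, b ^ ℓ ^ n = ∏ i, a i ^ x i) :
    ∀ i, (ℓ : ℤ) ^ n ∣ x i :=
  stmt9_general K ℓ r a ha x n hpow
end

section
/- Let K be a number field, ℓ a prime number, and 𝒢 a finitely generated subgroup of K^×. Then there exists a positive integer m with the following property: for every nonnegative integer n and every x ∈ K^× with x^{ℓ^n} ∈ 𝒢, one has x^{ℓ^m} ∈ 𝒢. -/
open NumberField IsDedekindDomain IntermediateField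

set_option synthInstance.maxHeartbeats 1000000
set_option maxHeartbeats 1000000

/-!
If `x ^ ℓ ^ n ∈ 𝒢`, then `x` has valuation zero at every prime outside the finite set `S` of
primes at which some generator of `𝒢` has nonzero valuation, so all such `x` form a subgroup of
the `S`-units. The `S`-units are finitely generated: modulo the kernel of the valuations at `S`,
which consists of the units of `𝓞 K`, they embed into `ℤ ^ S`. Hence that subgroup is finitely
generated, and an exponent that works for each of finitely many generators works for all of it.
-/

open Filter

namespace Subgroup

variable {G : Type*} [CommGroup G]

theorem fg_iff_toIntSubmodule_fg (H : Subgroup G) :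
    H.FG ↔ H.toAddSubgroup.toIntSubmodule.FG := by
  rw [fg_iff_add_fg, Submodule.fg_iff_addSubgroup_fg, AddSubgroup.toIntSubmodule_toAddSubgroup]

theorem FG.of_le {H K : Subgroup G} (hK : K.FG) (hHK : H ≤ K) : H.FG := by
  rw [fg_iff_toIntSubmodule_fg] at hK ⊢
  exact hK.of_le hHK

theorem fg_of_fg_map_of_fg_inf_ker {G' : Type*} [CommGroup G'] (f : G →* G') {H : Subgroup G}
    (hmap : (H.map f).FG) (hker : (H ⊓ f.ker).FG) : H.FG := by
  rw [fg_iff_toIntSubmodule_fg] at hmap hker ⊢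
  exact Submodule.fg_of_fg_map_of_fg_inf_ker f.toAdditive.toIntLinearMap hmap hker

variable (k : ℕ)

def powerRadical (𝒢 : Subgroup G) : Subgroup G where
  carrier := {x | ∃ n, x ^ k ^ n ∈ 𝒢}
  one_mem' := ⟨0, by simp⟩
  mul_mem' := by
    rintro x y ⟨a, hx⟩ ⟨b, hy⟩
    refine ⟨a + b, ?_⟩
    rw [mul_pow, pow_add, pow_mul, mul_comm (k ^ a), pow_mul]
    exact 𝒢.mul_mem (𝒢.pow_mem hx _) (𝒢.pow_mem hy _)
  inv_mem' := by
    rintro x ⟨n, hx⟩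
    exact ⟨n, by simpa using 𝒢.inv_mem hx⟩

variable {k} {𝒢 : Subgroup G}

theorem pow_pow_mem_of_le {x : G} {n m : ℕ} (hx : x ^ k ^ n ∈ 𝒢) (hnm : n ≤ m) :
    x ^ k ^ m ∈ 𝒢 := by
  obtain ⟨c, hc⟩ := pow_dvd_pow k hnm
  rw [hc, pow_mul]
  exact 𝒢.pow_mem hx c

theorem eventually_forall_pow_pow_mem (hfg : (𝒢.powerRadical k).FG) :
    ∀ᶠ m in atTop, ∀ x ∈ 𝒢.powerRadical k, x ^ k ^ m ∈ 𝒢 := by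
  obtain ⟨T, hT⟩ := hfg
  have hgen : ∀ᶠ m in atTop, ∀ t ∈ T, t ^ k ^ m ∈ 𝒢 := by
    refine (eventually_all_finset T).mpr fun t ht => ?_
    obtain ⟨n, hn⟩ : t ∈ 𝒢.powerRadical k := hT ▸ subset_closure ht
    exact eventually_atTop.mpr ⟨n, fun m hm => pow_pow_mem_of_le hn hm⟩
  filter_upwards [hgen] with m hm
  have : closure (T : Set G) ≤ 𝒢.comap (powMonoidHom (k ^ m)) :=
    (closure_le _).mpr fun t ht => hm t ht
  exact fun x hx => this (hT ▸ hx)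

end Subgroup

namespace IsDedekindDomain

variable {R : Type*} [CommRing R] [IsDedekindDomain R] {K : Type*} [Field K] [Algebra R K]
  [IsFractionRing R K] {S : Set (HeightOneSpectrum R)}

theorem mem_unit_iff_valuationOfNeZero {x : Kˣ} :
    x ∈ S.unit K ↔ ∀ v ∉ S, v.valuationOfNeZero x = 1 := by
  change (∀ v ∉ S, v.valuation K x = 1) ↔ _
  simp only [← HeightOneSpectrum.valuationOfNeZero_eq]
  norm_cast

theorem mem_unit_of_pow_mem_unit {x : Kˣ} {k : ℕ} (hk : k ≠ 0) (hx : x ^ k ∈ S.unit K) :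
    x ∈ S.unit K := by
  rw [mem_unit_iff_valuationOfNeZero] at hx ⊢
  intro v hv
  simpa [hk] using hx v hv

theorem HeightOneSpectrum.finite_setOf_valuation_ne_one (x : Kˣ) :
    {v : HeightOneSpectrum R | v.valuation K x ≠ 1}.Finite := by
  refine ((Support.finite R (x : K)).union (Support.finite R (x : K)⁻¹)).subset ?_
  intro v hv
  rcases Ne.lt_or_gt hv with hlt | hgt
  · right
    change 1 < v.valuation K (x : K)⁻¹
    rw [map_inv₀]
    have hpos : 0 < v.valuation K x := zero_lt_iff.mpr ((Valuation.ne_zero_iff _).mpr x.ne_zero)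
    exact (one_lt_inv₀ hpos).mpr hlt
  · exact Or.inl hgt

theorem exists_finite_le_unit {𝒢 : Subgroup Kˣ} (h𝒢 : 𝒢.FG) :
    ∃ S : Set (HeightOneSpectrum R), S.Finite ∧ 𝒢 ≤ S.unit K := by
  obtain ⟨T, rfl⟩ := h𝒢
  refine ⟨⋃ t ∈ T, {v | v.valuation K t ≠ 1},
    T.finite_toSet.biUnion fun t _ => HeightOneSpectrum.finite_setOf_valuation_ne_one t, ?_⟩
  refine (Subgroup.closure_le _).mpr fun t ht v hv => ?_
  by_contra h
  exact hv (Set.mem_biUnion ht h)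

theorem unit_empty_le_range :
    (∅ : Set (HeightOneSpectrum R)).unit K ≤ (Units.map (algebraMap R K : R →* K)).range := by
  intro x hx
  have hint (y : Kˣ) (hy : y ∈ (∅ : Set (HeightOneSpectrum R)).unit K) :
      ∃ r : R, algebraMap R K r = y :=
    HeightOneSpectrum.mem_integers_of_valuation_le_one K y fun v =>
      (hy v (Set.notMem_empty v)).le
  obtain ⟨r, hr⟩ := hint x hx
  obtain ⟨s, hs⟩ := hint x⁻¹ (inv_mem hx)
  have hrs : r * s = 1 := FaithfulSMul.algebraMap_injective R K (by simp [hr, hs])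
  exact ⟨Units.mkOfMulEqOne r s hrs, Units.ext hr⟩

end IsDedekindDomain

namespace NumberField

theorem unit_fg {K : Type*} [Field K] [NumberField K]
    {S : Set (HeightOneSpectrum (𝓞 K))} (hS : S.Finite) : (S.unit K).FG := by
  have : Finite S := hS.to_subtype
  let val : Kˣ →* (S → Multiplicative ℤ) := MonoidHom.pi fun v => v.1.valuationOfNeZero
  refine Subgroup.fg_of_fg_map_of_fg_inf_ker val (Group.FG.out.of_le le_top) ?_
  have hker : S.unit K ⊓ val.ker ≤ (∅ : Set (HeightOneSpectrum (𝓞 K))).unit K := by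
    intro x hx
    obtain ⟨hxS, hx⟩ := Subgroup.mem_inf.mp hx
    rw [mem_unit_iff_valuationOfNeZero] at hxS ⊢
    intro v _
    by_cases hv : v ∈ S
    · exact congrFun hx ⟨v, hv⟩
    · exact hxS v hv
  have : Group.FG (𝓞 K)ˣ := Group.fg_iff_monoid_fg.mpr inferInstance
  exact ((Group.fg_iff_subgroup_fg _).mp inferInstance).of_le
    (hker.trans unit_empty_le_range)

end NumberField

/-- for a finitely generated subgroup `𝒢` of `Kˣ` there is a positive
integer `m` such that any `x ∈ Kˣ` with `x ^ ℓ ^ n ∈ 𝒢` for some `n ≥ 0` satisfies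
`x ^ ℓ ^ m ∈ 𝒢`. -/
theorem stmt10 (K : Type) [Field K] [NumberField K] (ℓ : ℕ) (hℓ : ℓ.Prime)
    (𝒢 : Subgroup Kˣ) (hfg : 𝒢.FG) :
    ∃ m : ℕ, 0 < m ∧ ∀ (n : ℕ) (x : Kˣ), x ^ ℓ ^ n ∈ 𝒢 → x ^ ℓ ^ m ∈ 𝒢 := by
  obtain ⟨S, hS, h𝒢S⟩ := exists_finite_le_unit (R := 𝓞 K) hfg
  have hrad : 𝒢.powerRadical ℓ ≤ S.unit K := fun x ⟨n, hx⟩ =>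
    mem_unit_of_pow_mem_unit (pow_ne_zero n hℓ.ne_zero) (h𝒢S hx)
  obtain ⟨m, hm, hm_pos⟩ := ((Subgroup.eventually_forall_pow_pow_mem
    ((unit_fg hS).of_le hrad)).and (eventually_gt_atTop 0)).exists
  exact ⟨m, hm_pos, fun n x hx => hm x ⟨n, hx⟩⟩
end

section
/- Let K be a number field, ℓ a prime number, and G a torsion-free finitely generated subgroup of K^× of rank r > 0; set z = v_ℓ(#(torsion subgroup of K^×)). Suppose G is generated by b_1,…,b_r where b_i = B_i^{ℓ^{d_i}}ζ_i, the B_1,…,B_r ∈ K^× are strongly ℓ-independent, and ζ_i ∈ K is a root of unity of order ℓ^{h_i}. Let n ≥ 0, write δ_i = max(n - d_i, 0), set G_n = G ∩ (K^×)^{ℓ^n}, and let H_n be the subgroup of G/G_n generated by the classes of b_1^{ℓ^{δ_1}},…,b_r^{ℓ^{δ_r}}. Then: (i) H_n is a finite cyclic ℓ-group whose order has ℓ-adic valuation max(h_1-δ_1,…,h_r-δ_r, z-n, 0) + min(n-z, 0); and (ii) the quotient (G/G_n)/H_n is isomorphic to the direct sum over i = 1,…,r of ℤ/ℓ^{δ_i}ℤ.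 -/
open NumberField IsDedekindDomain IntermediateField

set_option synthInstance.maxHeartbeats 1000000
set_option maxHeartbeats 1000000

/-!
Write `b i = B i ^ ℓ ^ d i * ζ i`. Strong independence of the `B i` gives `ℓ ^ m ∣ x i` whenever
`(∏ i, B i ^ x i) * u` is an `ℓ ^ m`-th power for a root of unity `u` of `ℓ`-power order. Hence
`x ↦ ∏ i, b i ^ x i` is an isomorphism `ℤ ^ r ≃ G`, and `∏ i, b i ^ x i` is an `ℓ ^ n`-th power
only if `ℓ ^ (n - d i) ∣ x i` for all `i`. So `G_n` lies in the group `C` generated by the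
`b i ^ ℓ ^ (n - d i)`, and `(G / G_n) / H_n ≃ G / C ≃ ∏ i, ℤ / ℓ ^ (n - d i)`.

Modulo `ℓ ^ n`-th powers, `b i ^ ℓ ^ (n - d i) ≡ ζ i ^ ℓ ^ (n - d i)`, so `H_n` is the image of the
cyclic group `S` of order `ℓ ^ M`, `M = max_i (h i - (n - d i))`, generated by the
`ζ i ^ ℓ ^ (n - d i)`. As the roots of unity of `ℓ`-power order in `K` form a cyclic group of
order `ℓ ^ z`, an element of `S` is an `ℓ ^ n`-th power iff it is killed by `ℓ ^ (z - n)`.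
Thus `H_n ≃ S ^ ℓ ^ (z - n)`, which is cyclic of order `ℓ ^ (M - (z - n))`.
-/

theorem Nat.pow_div_gcd_pow {p : ℕ} (hp : 0 < p) (a b : ℕ) :
    p ^ a / Nat.gcd (p ^ a) (p ^ b) = p ^ (a - b) := by
  have hgcd : Nat.gcd (p ^ a) (p ^ b) = p ^ min a b := by
    rcases le_total a b with hab | hab
    · rw [min_eq_left hab, Nat.gcd_eq_left (pow_dvd_pow p hab)]
    · rw [min_eq_right hab, Nat.gcd_eq_right (pow_dvd_pow p hab)]
  rw [hgcd, Nat.pow_div (min_le_left a b) hp]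
  congr 1
  omega

theorem Int.eq_zero_of_forall_pow_dvd {ℓ : ℕ} (hℓ : 1 < ℓ) {y : ℤ} (hy : ∀ m, (ℓ : ℤ) ^ m ∣ y) :
    y = 0 := by
  refine Int.eq_zero_of_dvd_of_natAbs_lt_natAbs (hy y.natAbs) ?_
  rw [Int.natAbs_pow, Int.natAbs_natCast]
  exact Nat.lt_pow_self hℓ

theorem Finset.natCast_sup_tsub {ι : Type*} {s : Finset ι} (hs : s.Nonempty) (a b : ι → ℕ) :
    ((s.sup fun i => a i - b i : ℕ) : ℤ) = max (s.sup' hs fun i => (a i : ℤ) - b i) 0 := by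
  obtain ⟨i, hi, hsup⟩ := s.exists_mem_eq_sup hs fun i => a i - b i
  obtain ⟨j, hj, hsup'⟩ := s.exists_mem_eq_sup' hs fun i => (a i : ℤ) - b i
  have hji : a j - b j ≤ a i - b i := hsup ▸ Finset.le_sup (f := fun i => a i - b i) hj
  have hij : (a i : ℤ) - b i ≤ a j - b j := hsup' ▸ Finset.le_sup' (fun i => (a i : ℤ) - b i) hi
  rw [hsup, hsup']
  omega

section CommGroup

variable {A : Type*} [CommGroup A]

theorem Subgroup.closure_range_le_ker_powMonoidHom {ι : Type*} {c : ι → A} {e : ℕ}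
    (hc : ∀ i, c i ^ e = 1) : Subgroup.closure (Set.range c) ≤ (powMonoidHom e : A →* A).ker :=
  (Subgroup.closure_le _).mpr <| Set.range_subset_iff.mpr hc

theorem Subgroup.card_closure_range_of_orderOf_eq_pow {ι : Type*} [Fintype ι] {p : ℕ}
    (hp : p.Prime) {c : ι → A} {m : ι → ℕ} (hc : ∀ i, orderOf (c i) = p ^ m i)
    [IsCyclic (Subgroup.closure (Set.range c))] [Finite (Subgroup.closure (Set.range c))] :
    Nat.card (Subgroup.closure (Set.range c)) = p ^ Finset.univ.sup m := by
  set S := Subgroup.closure (Set.range c)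
  have hexp : Monoid.exponent S ∣ p ^ Finset.univ.sup m := by
    refine Monoid.exponent_dvd_of_forall_pow_eq_one fun s => Subtype.ext ?_
    refine Subgroup.closure_range_le_ker_powMonoidHom (fun i => ?_) s.2
    exact orderOf_dvd_iff_pow_eq_one.mp (hc i ▸ pow_dvd_pow p (Finset.le_sup (Finset.mem_univ i)))
  rw [IsCyclic.exponent_eq_card] at hexp
  obtain ⟨k, hk, hcard⟩ := (Nat.dvd_prime_pow hp).mp hexp
  rw [hcard]
  refine congrArg (p ^ ·) (le_antisymm hk (Finset.sup_le fun i _ => ?_))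
  have hdvd : orderOf (c i) ∣ Nat.card S :=
    Subgroup.orderOf_dvd_natCard S (Subgroup.subset_closure (Set.mem_range_self i))
  rwa [hc i, hcard, Nat.pow_dvd_pow_iff_le_right hp.one_lt] at hdvd

theorem orderOf_pow_prime_pow {p : ℕ} (hp : p.Prime) {x : A} {h : ℕ} (hx : orderOf x = p ^ h)
    (a : ℕ) : orderOf (x ^ p ^ a) = p ^ (h - a) := by
  rw [orderOf_pow' _ (pow_ne_zero _ hp.ne_zero), hx, Nat.pow_div_gcd_pow hp.pos]

theorem IsCyclic.ker_powMonoidHom_le_range [IsCyclic A] [Finite A] {a b : ℕ}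
    (hab : a * b ∣ Nat.card A) :
    (powMonoidHom a : A →* A).ker ≤ (powMonoidHom b : A →* A).range := by
  obtain ⟨c, hc⟩ := hab
  have hrange_le_ker : (powMonoidHom (b * c) : A →* A).range ≤ (powMonoidHom a).ker := by
    rintro _ ⟨x, rfl⟩
    rw [MonoidHom.mem_ker, powMonoidHom_apply, powMonoidHom_apply, ← pow_mul,
      show b * c * a = Nat.card A by rw [hc]; ring, pow_card_eq_one']
  have hcard : Nat.card (powMonoidHom a : A →* A).ker ≤
      Nat.card (powMonoidHom (b * c) : A →* A).range := by
    have hbc : 0 < b * c := Nat.pos_of_ne_zero fun h0 => by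
      have hA : Nat.card A ≠ 0 := Nat.card_pos.ne'
      simp [hc, mul_assoc, h0] at hA
    rw [IsCyclic.card_powMonoidHom_ker, IsCyclic.card_powMonoidHom_range, hc, mul_assoc,
      Nat.gcd_eq_right (Dvd.intro _ rfl), Nat.gcd_eq_right (Dvd.intro_left _ rfl),
      Nat.mul_div_cancel _ hbc]
  rw [← Subgroup.eq_of_le_of_card_ge hrange_le_ker hcard]
  rintro _ ⟨x, rfl⟩
  exact ⟨x ^ c, by simp only [powMonoidHom_apply, ← pow_mul, mul_comm]⟩

end CommGroup

section Torsion

variable {A : Type*} [CommGroup A]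

theorem orderOf_dvd_pow_padicValNat_card {S : Subgroup A} [Finite S] {p : ℕ} (hp : p.Prime)
    {c : A} (hc : c ∈ S) {k : ℕ} (hck : c ^ p ^ k = 1) :
    orderOf c ∣ p ^ padicValNat p (Nat.card S) := by
  have := Fact.mk hp
  obtain ⟨j, -, hj⟩ := (Nat.dvd_prime_pow hp).mp (orderOf_dvd_of_pow_eq_one hck)
  have hdvd := Subgroup.orderOf_dvd_natCard S hc
  rw [hj] at hdvd ⊢
  exact pow_dvd_pow p ((padicValNat_dvd_iff_le Nat.card_pos.ne').mp hdvd)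

theorem mem_range_powMonoidHom_iff_pow_eq_one [Finite (CommGroup.torsion A)]
    [IsCyclic (CommGroup.torsion A)] {p : ℕ} (hp : p.Prime) {t : A} {k : ℕ} (ht : t ^ p ^ k = 1)
    (n : ℕ) :
    t ∈ (powMonoidHom (p ^ n) : A →* A).range ↔
      t ^ p ^ (padicValNat p (Nat.card (CommGroup.torsion A)) - n) = 1 := by
  set z := padicValNat p (Nat.card (CommGroup.torsion A))
  constructor
  · rintro ⟨c, rfl⟩
    simp only [powMonoidHom_apply, ← pow_mul, ← pow_add] at ht ⊢
    have hc : c ∈ CommGroup.torsion A :=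
      isOfFinOrder_iff_pow_eq_one.mpr ⟨_, pow_pos hp.pos _, ht⟩
    refine orderOf_dvd_iff_pow_eq_one.mp ((orderOf_dvd_pow_padicValNat_card hp hc ht).trans ?_)
    exact pow_dvd_pow p (by omega)
  · intro htz
    rcases le_or_gt z n with hzn | hnz
    · rw [Nat.sub_eq_zero_of_le hzn, pow_zero, pow_one] at htz
      exact htz ▸ one_mem _
    have htT : t ∈ CommGroup.torsion A :=
      isOfFinOrder_iff_pow_eq_one.mpr ⟨_, pow_pos hp.pos _, htz⟩
    have hdvd : p ^ (z - n) * p ^ n ∣ Nat.card (CommGroup.torsion A) := by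
      rw [← pow_add, Nat.sub_add_cancel hnz.le]
      exact pow_padicValNat_dvd
    obtain ⟨c, hc⟩ := IsCyclic.ker_powMonoidHom_le_range hdvd
      (show (⟨t, htT⟩ : CommGroup.torsion A) ∈ (powMonoidHom (p ^ (z - n))).ker from
        Subtype.ext htz)
    exact ⟨c, congrArg Subtype.val hc⟩

theorem finite_closure_range_of_pow_eq_one [Finite (CommGroup.torsion A)] {ι : Type*}
    {c : ι → A} {e : ℕ} (he : 0 < e) (hc : ∀ i, c i ^ e = 1) :
    Finite (Subgroup.closure (Set.range c)) :=
  Finite.of_injective _ <| Subgroup.inclusion_injective (K := CommGroup.torsion A) fun _ hx =>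
    isOfFinOrder_iff_pow_eq_one.mpr ⟨e, he, Subgroup.closure_range_le_ker_powMonoidHom hc hx⟩

end Torsion

instance NumberField.finite_torsion_units (K : Type*) [Field K] [NumberField K] :
    Finite (CommGroup.torsion Kˣ) := by
  refine Set.Finite.to_subtype (Set.Finite.of_finite_image ?_ Units.val_injective.injOn)
  refine (Embeddings.finite_of_norm_le K ℂ 1).subset ?_
  rintro _ ⟨u, hu, rfl⟩
  obtain ⟨k, hk, hu1⟩ := isOfFinOrder_iff_pow_eq_one.mp hu
  refine ⟨IsIntegral.of_pow hk ?_, fun φ => ?_⟩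
  · rw [← Units.val_pow_eq_pow_val, hu1, Units.val_one]
    exact isIntegral_one
  · exact ((φ.toMonoidHom.comp (Units.coeHom K)).isOfFinOrder hu).norm_eq_one.le

def intCastPi {ι : Type*} (m : ι → ℕ) :
    Multiplicative (ι → ℤ) →* ((i : ι) → Multiplicative (ZMod (m i))) :=
  MonoidHom.mk' (fun x i => Multiplicative.ofAdd (x.toAdd i : ZMod (m i))) fun x y => by
    funext i
    simp only [toAdd_mul, Pi.add_apply, Int.cast_add, ofAdd_add, Pi.mul_apply]

theorem intCastPi_surjective {ι : Type*} (m : ι → ℕ) : Function.Surjective (intCastPi m) := fun y =>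
  ⟨Multiplicative.ofAdd fun i => ((y i).toAdd.cast : ℤ), funext fun i => by
    simp [intCastPi]⟩

theorem intCastPi_eq_one_iff {ι : Type*} (m : ι → ℕ) (x : Multiplicative (ι → ℤ)) :
    intCastPi m x = 1 ↔ ∀ i, (m i : ℤ) ∣ x.toAdd i := by
  simp only [intCastPi, MonoidHom.mk'_apply, funext_iff, Pi.one_apply, ← ofAdd_zero,
    EmbeddingLike.apply_eq_iff_eq, ZMod.intCast_zmod_eq_zero_iff_dvd]

section ProdZPow

variable {A : Type*} [CommGroup A] {ι : Type*} [Fintype ι]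

def prodZPow (c : ι → A) : Multiplicative (ι → ℤ) →* A :=
  MonoidHom.mk' (fun x => ∏ i, c i ^ x.toAdd i) fun x y => by
    simp only [toAdd_mul, Pi.add_apply, zpow_add, Finset.prod_mul_distrib]

@[simp]
theorem prodZPow_apply (c : ι → A) (x : Multiplicative (ι → ℤ)) :
    prodZPow c x = ∏ i, c i ^ x.toAdd i :=
  rfl

theorem range_prodZPow [DecidableEq ι] (c : ι → A) :
    (prodZPow c).range = Subgroup.closure (Set.range c) := by
  refine le_antisymm ?_ ((Subgroup.closure_le _).mpr ?_)
  · rintro _ ⟨x, rfl⟩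
    exact Subgroup.prod_mem _ fun i _ =>
      Subgroup.zpow_mem _ (Subgroup.subset_closure (Set.mem_range_self i)) _
  · rintro _ ⟨i, rfl⟩
    refine ⟨Multiplicative.ofAdd (Pi.single i 1), ?_⟩
    simp [Pi.single_apply]

theorem prodZPow_pow (c : ι → A) (k : ι → ℕ) (x : Multiplicative (ι → ℤ)) :
    prodZPow (fun i => c i ^ k i) x =
      prodZPow c (Multiplicative.ofAdd fun i => k i * x.toAdd i) := by
  simp only [prodZPow_apply, toAdd_ofAdd, zpow_mul, zpow_natCast]

theorem prodZPow_mem_closure_range_pow_iff [DecidableEq ι] {c : ι → A}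
    (hc : Function.Injective (prodZPow c)) (k : ι → ℕ) (x : Multiplicative (ι → ℤ)) :
    prodZPow c x ∈ Subgroup.closure (Set.range fun i => c i ^ k i) ↔
      ∀ i, (k i : ℤ) ∣ x.toAdd i := by
  rw [← range_prodZPow]
  constructor
  · rintro ⟨y, hy⟩ i
    rw [prodZPow_pow] at hy
    exact ⟨y.toAdd i, by rw [← hc hy]; rfl⟩
  · intro hx
    choose y hy using hx
    refine ⟨Multiplicative.ofAdd y, ?_⟩
    rw [prodZPow_pow]
    congr
    funext i
    exact (hy i).symm

noncomputable def prodZPowEquiv [DecidableEq ι] {c : ι → A}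
    (hc : Function.Injective (prodZPow c)) :
    Multiplicative (ι → ℤ) ≃* Subgroup.closure (Set.range c) :=
  (MonoidHom.ofInjective hc).trans (MulEquiv.subgroupCongr (range_prodZPow c))

noncomputable def quotientClosureRangePowEquiv [DecidableEq ι] {c : ι → A}
    (hc : Function.Injective (prodZPow c)) (k : ι → ℕ) :
    Subgroup.closure (Set.range c) ⧸
        (Subgroup.closure (Set.range fun i => c i ^ k i)).subgroupOf
          (Subgroup.closure (Set.range c)) ≃*
      ((i : ι) → Multiplicative (ZMod (k i))) :=
  let e := prodZPowEquiv hc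
  have hker : (intCastPi k).ker.map e.toMonoidHom =
      (Subgroup.closure (Set.range fun i => c i ^ k i)).subgroupOf
        (Subgroup.closure (Set.range c)) := by
    ext g
    obtain ⟨x, rfl⟩ := e.surjective g
    rw [Subgroup.mem_map_equiv, MulEquiv.symm_apply_apply, MonoidHom.mem_ker,
      intCastPi_eq_one_iff, Subgroup.mem_subgroupOf, ← prodZPow_mem_closure_range_pow_iff hc]
    rfl
  (QuotientGroup.congr _ _ e hker).symm.trans
    (QuotientGroup.quotientKerEquivOfSurjective _ (intCastPi_surjective k))

end ProdZPow

section Quotient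

variable {A : Type*} [Group A]

noncomputable def Subgroup.mapMkSubgroupOfEquiv {G R C : Subgroup A} [R.Normal] (hCG : C ≤ G) :
    (C.subgroupOf G).map (QuotientGroup.mk' (R.subgroupOf G)) ≃* C.map (QuotientGroup.mk' R) :=
  let f := QuotientGroup.map (R.subgroupOf G) R G.subtype le_rfl
  have hf : Function.Injective f := by
    rw [← MonoidHom.ker_eq_bot_iff]
    exact (QuotientGroup.ker_map _ _ _ _).trans (QuotientGroup.map_mk'_self _)
  have hmap : ((C.subgroupOf G).map (QuotientGroup.mk' (R.subgroupOf G))).map f =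
      C.map (QuotientGroup.mk' R) := by
    rw [Subgroup.map_map, show f.comp (QuotientGroup.mk' _) =
        (QuotientGroup.mk' R).comp G.subtype from MonoidHom.ext fun _ => rfl,
      ← Subgroup.map_map, Subgroup.subgroupOf_map_subtype, inf_of_le_left hCG]
  (Subgroup.equivMapOfInjective _ f hf).trans (MulEquiv.subgroupCongr hmap)

noncomputable def Subgroup.mapMkEquivQuotientSubgroupOf (S R : Subgroup A) [R.Normal] :
    S.map (QuotientGroup.mk' R) ≃* S ⧸ R.subgroupOf S :=
  (MulEquiv.subgroupCongr ((QuotientGroup.mk' R).domRestrict_range S).symm).trans <|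
    (QuotientGroup.quotientKerEquivRange _).symm.trans <|
      QuotientGroup.quotientMulEquivOfEq <| by
        rw [MonoidHom.ker_domRestrict, QuotientGroup.ker_mk']

end Quotient

section PowerClasses

variable {A : Type*} [CommGroup A]

theorem map_mk'_closure_range_mul_pow_eq {ι : Type*} (R : Subgroup A) {p : ℕ} (B ζ : ι → A)
    (d : ι → ℕ) (n : ℕ) (hR : (powMonoidHom (p ^ n) : A →* A).range ≤ R) :
    (Subgroup.closure (Set.range fun i => (B i ^ p ^ d i * ζ i) ^ p ^ (n - d i))).map
        (QuotientGroup.mk' R) =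
      (Subgroup.closure (Set.range fun i => ζ i ^ p ^ (n - d i))).map (QuotientGroup.mk' R) := by
  rw [MonoidHom.map_closure, MonoidHom.map_closure, ← Set.range_comp, ← Set.range_comp]
  congr 2
  funext i
  have hmem : QuotientGroup.mk' R ((B i ^ p ^ d i) ^ p ^ (n - d i)) = 1 :=
    (QuotientGroup.eq_one_iff _).mpr <| hR ⟨B i ^ p ^ (d i + (n - d i) - n), by
      rw [powMonoidHom_apply, ← pow_mul, ← pow_mul, ← pow_add, ← pow_add,
        Nat.sub_add_cancel (by omega)]⟩
  rw [Function.comp_apply, Function.comp_apply, mul_pow, map_mul, hmem, one_mul]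

theorem subgroupOf_range_powMonoidHom_eq_ker [Finite (CommGroup.torsion A)]
    [IsCyclic (CommGroup.torsion A)] {p : ℕ} (hp : p.Prime) {S : Subgroup A} {k : ℕ}
    (hS : S ≤ (powMonoidHom (p ^ k) : A →* A).ker) (n : ℕ) :
    (powMonoidHom (p ^ n) : A →* A).range.subgroupOf S =
      (powMonoidHom (p ^ (padicValNat p (Nat.card (CommGroup.torsion A)) - n)) : S →* S).ker := by
  ext t
  rw [Subgroup.mem_subgroupOf, mem_range_powMonoidHom_iff_pow_eq_one hp (hS t.2) n,
    MonoidHom.mem_ker, powMonoidHom_apply, Subtype.ext_iff, Subgroup.coe_pow, Subgroup.coe_one]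

noncomputable def mapMkClosureEquivRangePow [Finite (CommGroup.torsion A)]
    [IsCyclic (CommGroup.torsion A)] {p : ℕ} (hp : p.Prime) {ι : Type*} (B : ι → A) {ζ : ι → A}
    {k : ℕ} (hζ : ∀ i, ζ i ^ p ^ k = 1) (d : ι → ℕ) (n : ℕ) :
    ((Subgroup.closure (Set.range fun i => (B i ^ p ^ d i * ζ i) ^ p ^ (n - d i))).subgroupOf
          (Subgroup.closure (Set.range fun i => B i ^ p ^ d i * ζ i))).map
        (QuotientGroup.mk' ((powMonoidHom (p ^ n) : A →* A).range.subgroupOf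
          (Subgroup.closure (Set.range fun i => B i ^ p ^ d i * ζ i)))) ≃*
      (powMonoidHom (p ^ (padicValNat p (Nat.card (CommGroup.torsion A)) - n)) :
        Subgroup.closure (Set.range fun i => ζ i ^ p ^ (n - d i)) →*
          Subgroup.closure (Set.range fun i => ζ i ^ p ^ (n - d i))).range :=
  have hCG : Subgroup.closure (Set.range fun i => (B i ^ p ^ d i * ζ i) ^ p ^ (n - d i)) ≤
      Subgroup.closure (Set.range fun i => B i ^ p ^ d i * ζ i) :=
    (Subgroup.closure_le _).mpr <| Set.range_subset_iff.mpr fun i =>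
      Subgroup.pow_mem _ (Subgroup.subset_closure (Set.mem_range_self i)) _
  have hS := Subgroup.closure_range_le_ker_powMonoidHom (e := p ^ k)
    (c := fun i => ζ i ^ p ^ (n - d i)) fun i => by rw [pow_right_comm, hζ, one_pow]
  (Subgroup.mapMkSubgroupOfEquiv hCG).trans <|
    (MulEquiv.subgroupCongr (map_mk'_closure_range_mul_pow_eq _ B ζ d n le_rfl)).trans <|
      (Subgroup.mapMkEquivQuotientSubgroupOf _ _).trans <|
        (QuotientGroup.quotientMulEquivOfEq (subgroupOf_range_powMonoidHom_eq_ker hp hS n)).trans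
          (QuotientGroup.quotientKerEquivRange _)

end PowerClasses

section StronglyIndep

variable {L : Type} [Field L] {ℓ r : ℕ} {B : Fin r → Lˣ}

theorem StronglyIndep.pow_dvd_of_prod_mul_eq_pow (hB : StronglyIndep L ℓ B) {m : ℕ}
    {x : Fin r → ℤ} {u c : Lˣ} {k : ℕ} (hu : u ^ ℓ ^ k = 1)
    (h : (∏ i, B i ^ x i) * u = c ^ ℓ ^ m) (i : Fin r) : (ℓ : ℤ) ^ m ∣ x i := by
  induction m generalizing x u c k with
  | zero => simp
  | succ m ih =>
    have hdvd : ∀ j, (ℓ : ℤ) ∣ x j := by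
      by_contra! ⟨j, hj⟩
      exact hB x ⟨j, hj⟩ ⟨u, c ^ ℓ ^ m, k, hu, by rw [h, ← pow_mul, ← pow_succ]⟩
    choose y hy using hdvd
    set P := ∏ i, B i ^ y i
    have hP : ∏ i, B i ^ x i = P ^ ℓ := by
      rw [← Finset.prod_pow]
      refine Finset.prod_congr rfl fun j _ => ?_
      rw [hy j, mul_comm, zpow_mul, zpow_natCast]
    have hu' : (P⁻¹ * c ^ ℓ ^ m) ^ ℓ = u := by
      rw [mul_pow, inv_pow, ← pow_mul, ← pow_succ, ← h, hP, inv_mul_cancel_left]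
    obtain ⟨t, ht⟩ := ih (k := k + 1) (by rw [pow_succ', pow_mul, hu', hu])
      (mul_inv_cancel_left P _)
    exact ⟨t, by rw [hy i, ht, pow_succ]; ring⟩

variable {ζ : Fin r → Lˣ} {e : ℕ}

theorem StronglyIndep.pow_dvd_of_prodZPow_mem_range (hB : StronglyIndep L ℓ B) (hℓ : ℓ ≠ 0)
    (hζ : ∀ i, ζ i ^ ℓ ^ e = 1) (d : Fin r → ℕ) {n : ℕ} {x : Multiplicative (Fin r → ℤ)}
    (hx : prodZPow (fun i => B i ^ ℓ ^ d i * ζ i) x ∈ (powMonoidHom (ℓ ^ n) : Lˣ →* Lˣ).range)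
    (i : Fin r) : (ℓ : ℤ) ^ (n - d i) ∣ x.toAdd i := by
  obtain ⟨c, hc⟩ := hx
  have hsplit : prodZPow (fun i => B i ^ ℓ ^ d i * ζ i) x =
      (∏ i, B i ^ ((ℓ : ℤ) ^ d i * x.toAdd i)) * prodZPow ζ x := by
    simp only [prodZPow_apply, mul_zpow, Finset.prod_mul_distrib, zpow_mul, ← Nat.cast_pow,
      zpow_natCast]
  have htors : prodZPow ζ x ^ ℓ ^ e = 1 :=
    Subgroup.closure_range_le_ker_powMonoidHom hζ (range_prodZPow ζ ▸ ⟨x, rfl⟩)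
  have hdvd := hB.pow_dvd_of_prod_mul_eq_pow htors (hsplit ▸ hc.symm) i
  rcases le_or_gt n (d i) with hnd | hnd
  · simp [Nat.sub_eq_zero_of_le hnd]
  · rw [← Nat.add_sub_cancel' hnd.le, pow_add] at hdvd
    exact (mul_dvd_mul_iff_left (pow_ne_zero _ (by exact_mod_cast hℓ))).mp hdvd

theorem StronglyIndep.injective_prodZPow (hB : StronglyIndep L ℓ B) (hℓ : 1 < ℓ)
    (hζ : ∀ i, ζ i ^ ℓ ^ e = 1) (d : Fin r → ℕ) :
    Function.Injective (prodZPow fun i => B i ^ ℓ ^ d i * ζ i) := by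
  refine (injective_iff_map_eq_one _).mpr fun x hx => ?_
  ext i
  refine Int.eq_zero_of_forall_pow_dvd hℓ fun m => ?_
  have := hB.pow_dvd_of_prodZPow_mem_range (by omega) hζ d (n := m + d i) (hx ▸ one_mem _) i
  rwa [Nat.add_sub_cancel] at this

theorem StronglyIndep.subgroupOf_range_powMonoidHom_le (hB : StronglyIndep L ℓ B) (hℓ : 1 < ℓ)
    (hζ : ∀ i, ζ i ^ ℓ ^ e = 1) (d : Fin r → ℕ) (n : ℕ) :
    (powMonoidHom (ℓ ^ n) : Lˣ →* Lˣ).range.subgroupOf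
        (Subgroup.closure (Set.range fun i => B i ^ ℓ ^ d i * ζ i)) ≤
      (Subgroup.closure (Set.range fun i => (B i ^ ℓ ^ d i * ζ i) ^ ℓ ^ (n - d i))).subgroupOf
        (Subgroup.closure (Set.range fun i => B i ^ ℓ ^ d i * ζ i)) := by
  classical
  intro g hg
  have hinj := hB.injective_prodZPow hℓ hζ d
  obtain ⟨x, rfl⟩ := (prodZPowEquiv hinj).surjective g
  exact (prodZPow_mem_closure_range_pow_iff hinj _ x).mpr fun i => by
    exact_mod_cast hB.pow_dvd_of_prodZPow_mem_range (by omega) hζ d hg i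

end StronglyIndep

theorem stmt13_general (K : Type) [Field K] [NumberField K] (ℓ : ℕ) (hℓ : ℓ.Prime)
    (G : Subgroup Kˣ) (r : ℕ) (hr : 0 < r)
    (B ζ : Fin r → Kˣ) (d h : Fin r → ℕ)
    (hB : StronglyIndep K ℓ B) (hζ : ∀ i, orderOf (ζ i) = ℓ ^ h i)
    (hG : G = Subgroup.closure (Set.range fun i => B i ^ ℓ ^ d i * ζ i))
    (n : ℕ) :
    IsCyclic
      ↥(Subgroup.map
        (QuotientGroup.mk' ((powMonoidHom (ℓ ^ n) : Kˣ →* Kˣ).range.subgroupOf G))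
        ((Subgroup.closure
          (Set.range fun i => (B i ^ ℓ ^ d i * ζ i) ^ ℓ ^ (n - d i))).subgroupOf G)) ∧
    (Nat.card
      ↥(Subgroup.map
        (QuotientGroup.mk' ((powMonoidHom (ℓ ^ n) : Kˣ →* Kˣ).range.subgroupOf G))
        ((Subgroup.closure
          (Set.range fun i => (B i ^ ℓ ^ d i * ζ i) ^ ℓ ^ (n - d i))).subgroupOf G)) : ℚ) =
      (ℓ : ℚ) ^
        (max (Finset.univ.sup' (Finset.univ_nonempty_iff.mpr ⟨⟨0, hr⟩⟩)
            fun i => (h i : ℤ) - max ((n : ℤ) - (d i : ℤ)) 0)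
          (max ((padicValNat ℓ (Nat.card ↥(CommGroup.torsion Kˣ)) : ℤ) - (n : ℤ)) 0) +
         min ((n : ℤ) - (padicValNat ℓ (Nat.card ↥(CommGroup.torsion Kˣ)) : ℤ)) 0) ∧
    Nonempty
      (((↥G ⧸ ((powMonoidHom (ℓ ^ n) : Kˣ →* Kˣ).range.subgroupOf G)) ⧸
        (Subgroup.map
          (QuotientGroup.mk' ((powMonoidHom (ℓ ^ n) : Kˣ →* Kˣ).range.subgroupOf G))
          ((Subgroup.closure
            (Set.range fun i => (B i ^ ℓ ^ d i * ζ i) ^ ℓ ^ (n - d i))).subgroupOf G))) ≃*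
        ((i : Fin r) → Multiplicative (ZMod (ℓ ^ (n - d i))))) := by
  classical
  subst hG
  have hζ' : ∀ i, ζ i ^ ℓ ^ Finset.univ.sup h = 1 := fun i => orderOf_dvd_iff_pow_eq_one.mp <|
    hζ i ▸ pow_dvd_pow ℓ (Finset.le_sup (Finset.mem_univ i))
  have := finite_closure_range_of_pow_eq_one (c := fun i => ζ i ^ ℓ ^ (n - d i))
    (pow_pos hℓ.pos _) fun i => by rw [pow_right_comm, hζ', one_pow]
  let e := mapMkClosureEquivRangePow hℓ B hζ' d n
  refine ⟨isCyclic_of_surjective e.symm.toMonoidHom e.symm.surjective, ?_,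
    ⟨(QuotientGroup.quotientQuotientEquivQuotient _ _
      (hB.subgroupOf_range_powMonoidHom_le hℓ.one_lt hζ' d n)).trans
        (quotientClosureRangePowEquiv (hB.injective_prodZPow hℓ.one_lt hζ' d) _)⟩⟩
  rw [Nat.card_congr e.toEquiv, IsCyclic.card_powMonoidHom_range,
    Subgroup.card_closure_range_of_orderOf_eq_pow hℓ fun i => orderOf_pow_prime_pow hℓ (hζ i) _,
    Nat.pow_div_gcd_pow hℓ.pos, Nat.cast_pow, ← zpow_natCast]
  congr 1
  have hsup := Finset.natCast_sup_tsub (Finset.univ_nonempty_iff.mpr ⟨⟨0, hr⟩⟩) h fun i => n - d i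
  rw [Finset.sup'_congr _ rfl fun i _ => show (h i : ℤ) - ((n - d i : ℕ) : ℤ) =
    (h i : ℤ) - max ((n : ℤ) - d i) 0 by omega] at hsup
  omega

/-- structure of `G/G_n` where `G_n = G ∩ (Kˣ)^{ℓ^n}`, for `G` generated by
`b i = B i ^ ℓ ^ d i * ζ i` with `B` strongly `ℓ`-independent and `ζ i` of order `ℓ ^ h i`.
With `z = v_ℓ(#(Kˣ)_tors)` and `δ i = max (n - d i) 0`, the subgroup `H_n` of `G/G_n`
generated by the classes of the `b i ^ ℓ ^ δ i` is a finite cyclic `ℓ`-group of order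
`ℓ ^ (max(h 1 - δ 1, …, h r - δ r, z - n, 0) + min (n - z) 0)`, and
`(G/G_n)/H_n ≅ ⊕_i ℤ/ℓ^{δ i}ℤ`. -/
theorem stmt13 (K : Type) [Field K] [NumberField K] (ℓ : ℕ) (hℓ : ℓ.Prime)
    (G : Subgroup Kˣ) (r : ℕ) (hr : 0 < r)
    (hfree : Nonempty (↥G ≃* Multiplicative (Fin r → ℤ)))
    (B ζ : Fin r → Kˣ) (d h : Fin r → ℕ)
    (hB : StronglyIndep K ℓ B) (hζ : ∀ i, orderOf (ζ i) = ℓ ^ h i)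
    (hG : G = Subgroup.closure (Set.range fun i => B i ^ ℓ ^ d i * ζ i))
    (n : ℕ) :
    IsCyclic
      ↥(Subgroup.map
        (QuotientGroup.mk' ((powMonoidHom (ℓ ^ n) : Kˣ →* Kˣ).range.subgroupOf G))
        ((Subgroup.closure
          (Set.range fun i => (B i ^ ℓ ^ d i * ζ i) ^ ℓ ^ (n - d i))).subgroupOf G)) ∧
    (Nat.card
      ↥(Subgroup.map
        (QuotientGroup.mk' ((powMonoidHom (ℓ ^ n) : Kˣ →* Kˣ).range.subgroupOf G))
        ((Subgroup.closure
          (Set.range fun i => (B i ^ ℓ ^ d i * ζ i) ^ ℓ ^ (n - d i))).subgroupOf G)) : ℚ) =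
      (ℓ : ℚ) ^
        (max (Finset.univ.sup' (Finset.univ_nonempty_iff.mpr ⟨⟨0, hr⟩⟩)
            fun i => (h i : ℤ) - max ((n : ℤ) - (d i : ℤ)) 0)
          (max ((padicValNat ℓ (Nat.card ↥(CommGroup.torsion Kˣ)) : ℤ) - (n : ℤ)) 0) +
         min ((n : ℤ) - (padicValNat ℓ (Nat.card ↥(CommGroup.torsion Kˣ)) : ℤ)) 0) ∧
    Nonempty
      (((↥G ⧸ ((powMonoidHom (ℓ ^ n) : Kˣ →* Kˣ).range.subgroupOf G)) ⧸
        (Subgroup.map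
          (QuotientGroup.mk' ((powMonoidHom (ℓ ^ n) : Kˣ →* Kˣ).range.subgroupOf G))
          ((Subgroup.closure
            (Set.range fun i => (B i ^ ℓ ^ d i * ζ i) ^ ℓ ^ (n - d i))).subgroupOf G))) ≃*
        ((i : Fin r) → Multiplicative (ZMod (ℓ ^ (n - d i))))) :=
  stmt13_general K ℓ hℓ G r hr B ζ d h hB hζ hG n
end

section
/- Let K be a number field, ℓ a prime number, and G a torsion-free finitely generated subgroup of K^× of rank r > 0. If (d_1,…,d_r,h_1,…,h_r) expresses the ℓ-divisibility of G in K, then for all sufficiently large integers n, the quotient G/(G ∩ (K^×)^{ℓ^n}) is isomorphic to the direct sum over i = 1,…,r of ℤ/ℓ^{n-d_i}ℤ. In particular, the multiset {d_1,…,d_r} is uniquely determined by K, ℓ and G, and for all sufficiently large n the minimal number of generators of G/(G ∩ (K^×)^{ℓ^n}) equals r. -/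
open NumberField IsDedekindDomain IntermediateField

set_option synthInstance.maxHeartbeats 1000000
set_option maxHeartbeats 1000000

/-!
Write the generators of `G` as `gᵢ = Bᵢ ^ ℓ ^ dᵢ * ζᵢ`. Once `n ≥ dᵢ + hᵢ` for all `i`, a product
`∏ gᵢ ^ xᵢ` is an `ℓ ^ n`-th power exactly when `ℓ ^ (n - dᵢ) ∣ xᵢ` for all `i`: the roots of unity
are killed by `ℓ ^ (n - dᵢ)`, and strong independence, applied to one `ℓ`-th root at a time, forces
the divisibility. So the exponent map `ℤʳ → G/(G ∩ (Kˣ)^{ℓ^n})` is onto with kernel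
`∏ ℓ ^ (n - dᵢ) ℤ`. The multiset of the `dᵢ` is read off this group from the orders
`ℓ ^ ∑ min (n - dᵢ) k` of its `ℓ ^ k`-torsion, and it needs exactly `r` generators because it is
generated by the images of the `gᵢ` and surjects onto `(ℤ/ℓ)ʳ`.
-/

section ExpHom

variable {ι M : Type*} [Fintype ι] [CommGroup M]

def expHom (g : ι → M) : Multiplicative (ι → ℤ) →* M where
  toFun x := ∏ i, g i ^ x.toAdd i
  map_one' := by simp
  map_mul' x y := by simp [zpow_add, Finset.prod_mul_distrib]

lemma expHom_apply (g : ι → M) (x : Multiplicative (ι → ℤ)) :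
    expHom g x = ∏ i, g i ^ x.toAdd i := rfl

lemma map_expHom {N : Type*} [CommGroup N] (f : M →* N) (g : ι → M)
    (x : Multiplicative (ι → ℤ)) : f (expHom g x) = expHom (f ∘ g) x := by
  simp [expHom_apply]

lemma range_expHom (g : ι → M) : (expHom g).range = Subgroup.closure (Set.range g) := by
  ext y
  rw [Subgroup.mem_closure_range_iff_of_fintype, MonoidHom.mem_range]
  exact ⟨fun ⟨x, hx⟩ => ⟨x.toAdd, hx.symm⟩, fun ⟨a, ha⟩ => ⟨.ofAdd a, ha.symm⟩⟩

lemma rank_le_card_of_surjective_expHom [Group.FG M] {g : ι → M}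
    (hg : Function.Surjective (expHom g)) : Group.rank M ≤ Fintype.card ι := by
  classical
  calc Group.rank M ≤ (Finset.univ.image g).card := Group.rank_le (by
        rw [Finset.coe_image, Finset.coe_univ, Set.image_univ, ← range_expHom,
          MonoidHom.range_eq_top.mpr hg])
    _ ≤ Fintype.card ι := Finset.card_image_le

end ExpHom

section ZModReduce

variable {ι : Type*}

def zmodReduce (m : ι → ℕ) : Multiplicative (ι → ℤ) →* ∀ i, Multiplicative (ZMod (m i)) where
  toFun x i := .ofAdd (x.toAdd i)
  map_one' := by funext i; simp
  map_mul' x y := by funext i; simp [← ofAdd_add]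

lemma zmodReduce_surjective (m : ι → ℕ) : Function.Surjective (zmodReduce m) := by
  intro y
  choose z hz using fun i => ZMod.intCast_surjective (y i).toAdd
  exact ⟨.ofAdd z, funext fun i => by simp [zmodReduce, hz i]⟩

lemma zmodReduce_eq_one_iff (m : ι → ℕ) (x : Multiplicative (ι → ℤ)) :
    zmodReduce m x = 1 ↔ ∀ i, (m i : ℤ) ∣ x.toAdd i := by
  simp [zmodReduce, funext_iff, ← ZMod.intCast_zmod_eq_zero_iff_dvd, ← ofAdd_zero]

lemma nonempty_mulEquiv_pi_zmod {Q : Type*} [Group Q] (m : ι → ℕ)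
    (θ : Multiplicative (ι → ℤ) →* Q) (hθ : Function.Surjective θ)
    (hker : ∀ x, θ x = 1 ↔ ∀ i, (m i : ℤ) ∣ x.toAdd i) :
    Nonempty (Q ≃* ∀ i, Multiplicative (ZMod (m i))) := by
  have : θ.ker = (zmodReduce m).ker := by
    ext x
    rw [MonoidHom.mem_ker, MonoidHom.mem_ker, hker, zmodReduce_eq_one_iff]
  exact ⟨(QuotientGroup.quotientKerEquivOfSurjective θ hθ).symm.trans <|
    (QuotientGroup.quotientMulEquivOfEq this).trans <|
      QuotientGroup.quotientKerEquivOfSurjective _ (zmodReduce_surjective m)⟩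

end ZModReduce

section PiZModPow

variable {ι : Type*} [Fintype ι] {ℓ : ℕ}

lemma card_le_rank_pi_zmod_pow [hℓ : Fact ℓ.Prime] {a : ι → ℕ} (ha : ∀ i, a i ≠ 0) :
    Fintype.card ι ≤ Group.rank (∀ i, Multiplicative (ZMod (ℓ ^ a i))) := by
  let ρ : (∀ i, Multiplicative (ZMod (ℓ ^ a i))) →* ∀ i : ι, Multiplicative (ZMod ℓ) :=
    MonoidHom.piMap fun i =>
      (ZMod.castHom (dvd_pow_self ℓ (ha i)) (ZMod ℓ)).toAddMonoidHom.toMultiplicative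
  have hρ : Function.Surjective ρ := Function.Surjective.piMap fun i =>
    ZMod.castHom_surjective (dvd_pow_self ℓ (ha i))
  have hexp (y : ∀ i : ι, Multiplicative (ZMod ℓ)) : y ^ ℓ = 1 := by
    funext i
    simpa using pow_card_eq_one' (G := Multiplicative (ZMod ℓ)) (x := y i)
  have hdvd := card_dvd_exponent_pow_rank' _ hexp
  simp only [Nat.card_pi, Nat.card_eq_fintype_card, Fintype.card_multiplicative, ZMod.card,
    Finset.prod_const, Finset.card_univ] at hdvd
  calc Fintype.card ι ≤ Group.rank (∀ i : ι, Multiplicative (ZMod ℓ)) :=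
        (Nat.pow_dvd_pow_iff_le_right hℓ.out.one_lt).mp hdvd
    _ ≤ _ := Group.rank_le_of_surjective ρ hρ

lemma MulEquiv.card_pow_eq_one {M N : Type*} [Monoid M] [Monoid N] (e : M ≃* N) (s : ℕ) :
    Nat.card {x : M // x ^ s = 1} = Nat.card {y : N // y ^ s = 1} :=
  Nat.card_congr (e.toEquiv.subtypeEquiv fun x => by simp [← map_pow])

lemma Nat.card_pi_pow_eq_one {M : ι → Type*} [∀ i, Monoid (M i)] (s : ℕ) :
    Nat.card {x : ∀ i, M i // x ^ s = 1} = ∏ i, Nat.card {y : M i // y ^ s = 1} := by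
  rw [← Nat.card_pi]
  exact Nat.card_congr ((Equiv.subtypeEquivRight fun x => funext_iff).trans
    (Equiv.subtypePiEquivPi (p := fun i (y : M i) => y ^ s = 1)))

lemma card_pow_eq_one_zmod (m s : ℕ) [NeZero m] :
    Nat.card {y : Multiplicative (ZMod m) // y ^ s = 1} = m.gcd s := by
  simpa using IsCyclic.card_powMonoidHom_ker (G := Multiplicative (ZMod m)) s

lemma Nat.gcd_pow_pow (ℓ a k : ℕ) : Nat.gcd (ℓ ^ a) (ℓ ^ k) = ℓ ^ min a k := by
  rcases le_total a k with h | h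
  · rw [Nat.gcd_eq_left (pow_dvd_pow ℓ h), min_eq_left h]
  · rw [Nat.gcd_eq_right (pow_dvd_pow ℓ h), min_eq_right h]

lemma card_pow_eq_one_pi_zmod_pow [NeZero ℓ] (a : ι → ℕ) (k : ℕ) :
    Nat.card {x : ∀ i, Multiplicative (ZMod (ℓ ^ a i)) // x ^ ℓ ^ k = 1} =
      ℓ ^ ∑ i, min (a i) k := by
  simp only [Nat.card_pi_pow_eq_one, card_pow_eq_one_zmod, Nat.gcd_pow_pow,
    Finset.prod_pow_eq_pow_sum]

end PiZModPow

namespace Multiset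

lemma sum_map_min_succ (s : Multiset ℕ) (k : ℕ) :
    (s.map (min · (k + 1))).sum = (s.map (min · k)).sum + card (s.filter (k < ·)) := by
  induction s using Multiset.induction with
  | empty => simp
  | cons a s ih =>
    simp only [map_cons, sum_cons, ih, filter_cons]
    split_ifs <;> simp <;> omega

lemma card_filter_le (s : Multiset ℕ) (c : ℕ) :
    card (s.filter (c ≤ ·)) = count c s + card (s.filter (c < ·)) := by
  induction s using Multiset.induction with
  | empty => simp
  | cons a s ih =>
    simp only [filter_cons, count_cons]
    split_ifs <;> simp <;> omega

lemma eq_of_sum_map_min_eq {s t : Multiset ℕ} (hcard : card s = card t)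
    (h : ∀ k, (s.map (min · k)).sum = (t.map (min · k)).sum) : s = t := by
  have hlt (k : ℕ) : card (s.filter (k < ·)) = card (t.filter (k < ·)) := by
    have := sum_map_min_succ s k
    rw [h, h, sum_map_min_succ] at this
    omega
  ext c
  have hs := card_filter_le s c
  have ht := card_filter_le t c
  rcases c with _ | c
  · rw [filter_eq_self.mpr fun _ _ => Nat.zero_le _] at hs ht
    rw [hlt] at hs
    omega
  · simp only [Nat.add_one_le_iff, hlt] at hs ht
    omega

lemma map_eq_of_map_sub_eq {ι : Type*} {s : Multiset ι} {f g : ι → ℕ} {n : ℕ}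
    (hf : ∀ i ∈ s, f i ≤ n) (hg : ∀ i ∈ s, g i ≤ n)
    (h : s.map (fun i => n - f i) = s.map (fun i => n - g i)) : s.map f = s.map g := by
  have := congrArg (map (n - ·)) h
  simp only [map_map, Function.comp_def] at this
  rwa [map_congr rfl fun i hi => Nat.sub_sub_self (hf i hi),
    map_congr rfl fun i hi => Nat.sub_sub_self (hg i hi)] at this

end Multiset

lemma map_eq_of_mulEquiv_pi_zmod_pow {ι : Type*} [Fintype ι] {ℓ : ℕ} (hℓ : 2 ≤ ℓ) {a b : ι → ℕ}
    (e : (∀ i, Multiplicative (ZMod (ℓ ^ a i))) ≃* ∀ i, Multiplicative (ZMod (ℓ ^ b i))) :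
    Multiset.map a Finset.univ.val = Multiset.map b Finset.univ.val := by
  have : NeZero ℓ := ⟨by omega⟩
  refine Multiset.eq_of_sum_map_min_eq (by simp) fun k => ?_
  simp only [Multiset.map_map, Function.comp_def]
  change ∑ i, min (a i) k = ∑ i, min (b i) k
  refine Nat.pow_right_injective hℓ ?_
  simpa only [card_pow_eq_one_pi_zmod_pow] using e.card_pow_eq_one (ℓ ^ k)

section StronglyIndep

variable {K : Type} [Field K] {ℓ r : ℕ}

lemma StronglyIndep.pow_dvd_of_mul_eq_pow_s14 {B : Fin r → Kˣ} (hB : StronglyIndep K ℓ B) (m : ℕ)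
    {y : Fin r → ℤ} {ζ c : Kˣ} {k : ℕ} (hζ : ζ ^ ℓ ^ k = 1)
    (h : (∏ i, B i ^ y i) * ζ = c ^ ℓ ^ m) (i : Fin r) : (ℓ : ℤ) ^ m ∣ y i := by
  induction m generalizing y ζ k with
  | zero => simp
  | succ m ih =>
    have h' : (∏ i, B i ^ y i) * ζ = (c ^ ℓ ^ m) ^ ℓ := by rw [h, ← pow_mul, pow_succ]
    have hdvd : ∀ j, (ℓ : ℤ) ∣ y j := by
      by_contra! ⟨j, hj⟩
      exact hB y ⟨j, hj⟩ ⟨ζ, c ^ ℓ ^ m, k, hζ, h'⟩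
    choose y' hy' using hdvd
    set P := ∏ i, B i ^ y' i
    have hP : ∏ i, B i ^ y i = P ^ ℓ := by
      simp only [P, ← Finset.prod_pow, hy', mul_comm (ℓ : ℤ), zpow_mul, zpow_natCast]
    -- `w` is an `ℓ`-th root of `ζ`, so it is again a root of unity of `ℓ`-power order
    set w := P⁻¹ * c ^ ℓ ^ m
    have hw : w ^ ℓ = ζ := by
      rw [mul_pow, inv_pow, ← h', hP, inv_mul_cancel_left]
    have hwk : w ^ ℓ ^ (k + 1) = 1 := by rw [pow_succ', pow_mul, hw, hζ]
    rw [hy' i, pow_succ']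
    exact mul_dvd_mul_left _ (ih hwk (by rw [mul_inv_cancel_left]))

lemma StronglyIndep.exists_pow_eq_prod_iff (hℓ : ℓ ≠ 0) {B ζ : Fin r → Kˣ} {d h : Fin r → ℕ}
    (hB : StronglyIndep K ℓ B) (hζ : ∀ i, orderOf (ζ i) = ℓ ^ h i) {n : ℕ}
    (hn : ∀ i, d i + h i ≤ n) (x : Fin r → ℤ) :
    (∃ c : Kˣ, c ^ ℓ ^ n = ∏ i, (B i ^ ℓ ^ d i * ζ i) ^ x i) ↔
      ∀ i, ((ℓ ^ (n - d i) : ℕ) : ℤ) ∣ x i := by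
  have hζpow : ∀ i k, h i ≤ k → ζ i ^ ℓ ^ k = 1 := fun i k hk =>
    orderOf_dvd_iff_pow_eq_one.mp (hζ i ▸ pow_dvd_pow ℓ hk)
  constructor
  · rintro ⟨c, hc⟩ i
    have hsplit : ∏ i, (B i ^ ℓ ^ d i * ζ i) ^ x i =
        (∏ i, B i ^ ((ℓ : ℤ) ^ d i * x i)) * ∏ i, ζ i ^ x i := by
      simp only [← Finset.prod_mul_distrib, mul_zpow, zpow_mul]
      norm_cast
    have hZ : (∏ i, ζ i ^ x i) ^ ℓ ^ n = 1 := by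
      rw [← Finset.prod_pow]
      refine Finset.prod_eq_one fun i _ => ?_
      rw [← zpow_natCast, ← zpow_mul, mul_comm, zpow_mul, zpow_natCast, hζpow i n (by grind),
        one_zpow]
    have := hB.pow_dvd_of_mul_eq_pow_s14 n hZ (hsplit ▸ hc.symm) i
    rw [← Nat.add_sub_of_le (show d i ≤ n by grind), pow_add] at this
    push_cast
    exact (mul_dvd_mul_iff_left (pow_ne_zero _ (by exact_mod_cast hℓ))).mp this
  · intro hx
    choose t ht using hx
    refine ⟨∏ i, B i ^ t i, ?_⟩
    rw [← Finset.prod_pow]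
    refine Finset.prod_congr rfl fun i _ => ?_
    have : (B i ^ ℓ ^ d i * ζ i) ^ ℓ ^ (n - d i) = B i ^ ℓ ^ n := by
      rw [mul_pow, ← pow_mul, ← pow_add, hζpow i _ (by grind), mul_one,
        Nat.add_sub_of_le (by grind)]
    rw [ht i, zpow_mul, zpow_natCast, this, ← zpow_natCast, ← zpow_natCast, ← zpow_mul,
      ← zpow_mul, mul_comm]

end StronglyIndep

abbrev PowQuotient {M : Type*} [CommGroup M] (G : Subgroup M) (m : ℕ) : Type _ :=
  G ⧸ (powMonoidHom m : M →* M).range.subgroupOf G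

namespace ExpressesDiv

variable {K : Type} [Field K] {ℓ r : ℕ} {G : Subgroup Kˣ} {d h : Fin r → ℕ}

theorem exists_surjective_expHom (hℓ : ℓ ≠ 0) (hdh : ExpressesDiv K ℓ G d h) {n : ℕ}
    (hn : ∀ i, d i + h i ≤ n) :
    ∃ q : Fin r → PowQuotient G (ℓ ^ n), Function.Surjective (expHom q) ∧
      ∀ x, expHom q x = 1 ↔ ∀ i, ((ℓ ^ (n - d i) : ℕ) : ℤ) ∣ x.toAdd i := by
  obtain ⟨B, ζ, hB, hζ, rfl⟩ := hdh
  set g := fun i => B i ^ ℓ ^ d i * ζ i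
  let g' (i : Fin r) : Subgroup.closure (Set.range g) :=
    ⟨g i, Subgroup.subset_closure (Set.mem_range_self i)⟩
  have hcoe (x) : (expHom g' x : Kˣ) = expHom g x := map_expHom (Subgroup.subtype _) g' x
  set π := QuotientGroup.mk' ((powMonoidHom (ℓ ^ n) : Kˣ →* Kˣ).range.subgroupOf
    (Subgroup.closure (Set.range g)))
  have hq (x) : expHom (π ∘ g') x = π (expHom g' x) := by
    simp only [expHom_apply, map_prod, map_zpow, Function.comp_apply]
  refine ⟨π ∘ g', fun y => ?_, fun x => ?_⟩
  · obtain ⟨⟨u, hu⟩, rfl⟩ := QuotientGroup.mk_surjective y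
    obtain ⟨x, rfl⟩ := (range_expHom g).ge hu
    exact ⟨x, by rw [hq, QuotientGroup.mk'_apply]; exact congrArg _ (Subtype.ext (hcoe x))⟩
  · rw [hq, QuotientGroup.mk'_apply, QuotientGroup.eq_one_iff, Subgroup.mem_subgroupOf, hcoe,
      MonoidHom.mem_range]
    simp only [powMonoidHom_apply, expHom_apply]
    exact hB.exists_pow_eq_prod_iff hℓ hζ hn _

theorem nonempty_mulEquiv (hℓ : ℓ ≠ 0) (hdh : ExpressesDiv K ℓ G d h) {n : ℕ}
    (hn : ∀ i, d i + h i ≤ n) :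
    Nonempty (PowQuotient G (ℓ ^ n) ≃* ∀ i, Multiplicative (ZMod (ℓ ^ (n - d i)))) :=
  let ⟨_, hq, hker⟩ := hdh.exists_surjective_expHom hℓ hn
  nonempty_mulEquiv_pi_zmod _ _ hq hker

theorem rank_powQuotient [Fact ℓ.Prime] (hdh : ExpressesDiv K ℓ G d h) {n : ℕ}
    (hn : ∀ i, d i + h i < n) [Group.FG (PowQuotient G (ℓ ^ n))] :
    Group.rank (PowQuotient G (ℓ ^ n)) = r := by
  obtain ⟨q, hq, hker⟩ := hdh.exists_surjective_expHom (NeZero.ne ℓ) fun i => (hn i).le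
  obtain ⟨e⟩ := nonempty_mulEquiv_pi_zmod _ _ hq hker
  refine le_antisymm ((rank_le_card_of_surjective_expHom hq).trans_eq (Fintype.card_fin r)) ?_
  rw [Group.rank_congr e]
  simpa using card_le_rank_pi_zmod_pow (a := fun i => n - d i) fun i => by have := hn i; omega

end ExpressesDiv

theorem stmt14_general (K : Type) [Field K] (ℓ : ℕ) (hℓ : ℓ.Prime)
    (G : Subgroup Kˣ) (r : ℕ)
    (d h : Fin r → ℕ) (hdh : ExpressesDiv K ℓ G d h) :
    (∃ N : ℕ, ∀ n : ℕ, N ≤ n →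
      Nonempty ((↥G ⧸ ((powMonoidHom (ℓ ^ n) : Kˣ →* Kˣ).range.subgroupOf G)) ≃*
        ((i : Fin r) → Multiplicative (ZMod (ℓ ^ (n - d i)))))) ∧
    (∀ d' h' : Fin r → ℕ, ExpressesDiv K ℓ G d' h' →
      Multiset.map d Finset.univ.val = Multiset.map d' Finset.univ.val) ∧
    (∃ N : ℕ, ∀ n : ℕ, N ≤ n →
      (∃ S : Finset (↥G ⧸ ((powMonoidHom (ℓ ^ n) : Kˣ →* Kˣ).range.subgroupOf G)),
          Subgroup.closure (S : Set (↥G ⧸ ((powMonoidHom (ℓ ^ n) : Kˣ →* Kˣ).range.subgroupOf G))) = ⊤ ∧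
          S.card = r) ∧
        ∀ S : Finset (↥G ⧸ ((powMonoidHom (ℓ ^ n) : Kˣ →* Kˣ).range.subgroupOf G)),
          Subgroup.closure (S : Set (↥G ⧸ ((powMonoidHom (ℓ ^ n) : Kˣ →* Kˣ).range.subgroupOf G))) = ⊤ →
          r ≤ S.card) := by
  have : Fact ℓ.Prime := ⟨hℓ⟩
  have hlarge (d h : Fin r → ℕ) : ∀ᶠ n in Filter.atTop, ∀ i, d i + h i < n :=
    Filter.eventually_all.mpr fun i => Filter.eventually_gt_atTop _
  have hequiv (n) (hn : ∀ i, d i + h i < n) := hdh.nonempty_mulEquiv hℓ.ne_zero fun i => (hn i).le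
  refine ⟨Filter.eventually_atTop.mp ((hlarge d h).mono hequiv), fun d' h' hdh' => ?_,
    Filter.eventually_atTop.mp ((hlarge d h).mono fun n hn => ?_)⟩
  · obtain ⟨n, hn, hn'⟩ := ((hlarge d h).and (hlarge d' h')).exists
    obtain ⟨e⟩ := hequiv n hn
    obtain ⟨e'⟩ := hdh'.nonempty_mulEquiv hℓ.ne_zero fun i => (hn' i).le
    exact Multiset.map_eq_of_map_sub_eq (fun i _ => by grind) (fun i _ => by grind)
      (map_eq_of_mulEquiv_pi_zmod_pow hℓ.two_le (e.symm.trans e'))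
  · obtain ⟨e⟩ := hequiv n hn
    have : Finite (PowQuotient G (ℓ ^ n)) := .of_equiv _ e.symm.toEquiv
    have hrank := hdh.rank_powQuotient hn
    obtain ⟨S, hcard, hS⟩ := Group.rank_spec (PowQuotient G (ℓ ^ n))
    exact ⟨⟨S, hS, hcard.trans hrank⟩, fun S hS => hrank ▸ Group.rank_le hS⟩

/-- if `(d, h)` expresses the `ℓ`-divisibility of `G` in `K`, then for all
sufficiently large `n` we have `G/(G ∩ (Kˣ)^{ℓ^n}) ≅ ⊕_i ℤ/ℓ^{n - d i}ℤ`; the multiset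
of the `d i` is uniquely determined by `(K, ℓ, G)`; and for all sufficiently large `n`
the minimal number of generators of `G/(G ∩ (Kˣ)^{ℓ^n})` equals `r`. -/
theorem stmt14 (K : Type) [Field K] [NumberField K] (ℓ : ℕ) (hℓ : ℓ.Prime)
    (G : Subgroup Kˣ) (r : ℕ) (hr : 0 < r)
    (hfree : Nonempty (↥G ≃* Multiplicative (Fin r → ℤ)))
    (d h : Fin r → ℕ) (hdh : ExpressesDiv K ℓ G d h) :
    (∃ N : ℕ, ∀ n : ℕ, N ≤ n →
      Nonempty ((↥G ⧸ ((powMonoidHom (ℓ ^ n) : Kˣ →* Kˣ).range.subgroupOf G)) ≃*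
        ((i : Fin r) → Multiplicative (ZMod (ℓ ^ (n - d i)))))) ∧
    (∀ d' h' : Fin r → ℕ, ExpressesDiv K ℓ G d' h' →
      Multiset.map d Finset.univ.val = Multiset.map d' Finset.univ.val) ∧
    (∃ N : ℕ, ∀ n : ℕ, N ≤ n →
      (∃ S : Finset (↥G ⧸ ((powMonoidHom (ℓ ^ n) : Kˣ →* Kˣ).range.subgroupOf G)),
          Subgroup.closure (S : Set (↥G ⧸ ((powMonoidHom (ℓ ^ n) : Kˣ →* Kˣ).range.subgroupOf G))) = ⊤ ∧
          S.card = r) ∧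
        ∀ S : Finset (↥G ⧸ ((powMonoidHom (ℓ ^ n) : Kˣ →* Kˣ).range.subgroupOf G)),
          Subgroup.closure (S : Set (↥G ⧸ ((powMonoidHom (ℓ ^ n) : Kˣ →* Kˣ).range.subgroupOf G))) = ⊤ →
          r ≤ S.card) :=
  stmt14_general K ℓ hℓ G r d h hdh
end

section
/- Let K be a number field not containing a primitive 4th root of unity, and let G be a finitely generated subgroup of K^×. Then [K(square roots of G) : K] = e · [K(ζ_4)(square roots of G) : K(ζ_4)], where e = 2 if G contains an element of the form -x² with x ∈ K^×, and e = 1 otherwise. -/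
open NumberField IsDedekindDomain IntermediateField
open scoped Classical

set_option synthInstance.maxHeartbeats 1000000
set_option maxHeartbeats 1000000

/-!
Let `L = K(√G)` and `i = √-1`. As `ζ_4 = ±i ∉ K`, `[K(i) : K] = 2` and `K(ζ_4)(√G) = L(i)`, so the
identity reduces to: `i ∈ L` iff `G` contains some `-x²`. This is multiquadratic Kummer theory: a
square root of `c ∈ Kˣ` lies in `K(√G)` iff `c ∈ G · Kˣ²`. One adjoins the square roots one at a time;
in a quadratic extension `F(s)` with `s² ∈ F`, writing `t = u + v s`, the condition `t² ∈ F` forces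
`2uv = 0`, so `t ∈ F` or `t s ∈ F`.
-/

open Polynomial

theorem isPrimitiveRoot_four_of_sq_eq_neg_one {F : Type*} [Field F] [NeZero (2 : F)] {a : F}
    (ha : a ^ 2 = -1) : IsPrimitiveRoot a 4 := by
  refine IsPrimitiveRoot.iff_orderOf.2 (orderOf_eq_prime_pow (p := 2) (n := 1) ?_ ?_)
  · rw [pow_one, ha]
    intro h
    exact NeZero.ne (2 : F) (by linear_combination -h)
  · rw [show 2 ^ (1 + 1) = 2 * 2 by rfl, pow_mul, ha]
    norm_num

section FieldExtension

variable {K E : Type*} [Field K] [Field E] [Algebra K E]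

theorem IntermediateField.mem_of_sq_eq_sq {L : IntermediateField K E} {a b : E} (ha : a ∈ L)
    (h : b ^ 2 = a ^ 2) : b ∈ L := by
  rcases sq_eq_sq_iff_eq_or_eq_neg.1 h with rfl | rfl
  exacts [ha, neg_mem ha]

theorem finrank_adjoin_simple_eq_two {s : E} {a : K} (hs : s ^ 2 = algebraMap K E a)
    (hsK : s ∉ (algebraMap K E).range) : Module.finrank K K⟮s⟯ = 2 := by
  have hroot : aeval s (X ^ 2 - C a) = 0 := by simp [hs]
  have hmonic : (X ^ 2 - C a).Monic := monic_X_pow_sub_C a two_ne_zero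
  have hint : IsIntegral K s := ⟨_, hmonic, hroot⟩
  have hle : (minpoly K s).natDegree ≤ 2 := by
    simpa using natDegree_le_of_dvd (minpoly.dvd K s hroot) hmonic.ne_zero
  have hne : (minpoly K s).natDegree ≠ 1 := fun h ↦ hsK (minpoly.natDegree_eq_one_iff.1 h)
  have hpos := minpoly.natDegree_pos hint
  rw [IntermediateField.adjoin.finrank hint]
  omega

theorem IntermediateField.adjoin_pow_four_eq_one_eq_adjoin_simple {i : E} (hi : i ^ 2 = -1) :
    adjoin K {x : E | x ^ 4 = 1} = K⟮i⟯ := by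
  apply le_antisymm
  · refine adjoin_le_iff.2 fun x (hx : x ^ 4 = 1) ↦ ?_
    have : (x ^ 2 - 1 ^ 2) * (x ^ 2 - i ^ 2) = 0 := by linear_combination hx + (1 - x ^ 2) * hi
    rcases mul_eq_zero.1 this with h | h
    · exact mem_of_sq_eq_sq (one_mem _) (sub_eq_zero.1 h)
    · exact mem_of_sq_eq_sq (mem_adjoin_simple_self K i) (sub_eq_zero.1 h)
  · exact adjoin_simple_le_iff.2 <| subset_adjoin K _ <|
      show i ^ 4 = 1 by rw [show 4 = 2 * 2 by rfl, pow_mul, hi]; norm_num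

theorem IntermediateField.exists_eq_add_mul_of_mem_adjoin_sqrt (L : IntermediateField K E)
    {s t : E} (hs : s ^ 2 ∈ L) (ht : t ∈ adjoin L {s}) : ∃ u ∈ L, ∃ v ∈ L, t = u + v * s := by
  have hint : IsIntegral L s :=
    ⟨X ^ 2 - C ⟨s ^ 2, hs⟩, monic_X_pow_sub_C _ two_ne_zero, by simp⟩
  rw [← mem_toSubalgebra, adjoin_simple_toSubalgebra_of_isAlgebraic hint.isAlgebraic] at ht
  induction ht using Algebra.adjoin_induction with
  | mem x hx => exact ⟨0, zero_mem _, 1, one_mem _, by rw [hx]; ring⟩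
  | algebraMap r => exact ⟨r, r.2, 0, zero_mem _, by simp⟩
  | add x y _ _ hx hy =>
    obtain ⟨u, hu, v, hv, rfl⟩ := hx
    obtain ⟨u', hu', v', hv', rfl⟩ := hy
    exact ⟨u + u', add_mem hu hu', v + v', add_mem hv hv', by ring⟩
  | mul x y _ _ hx hy =>
    obtain ⟨u, hu, v, hv, rfl⟩ := hx
    obtain ⟨u', hu', v', hv', rfl⟩ := hy
    refine ⟨u * u' + v * v' * s ^ 2, add_mem (mul_mem hu hu') (mul_mem (mul_mem hv hv') hs),
      u * v' + v * u', add_mem (mul_mem hu hv') (mul_mem hv hu'), by ring⟩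

theorem IntermediateField.mem_or_mul_mem_of_mem_adjoin_sqrt [NeZero (2 : E)]
    (L : IntermediateField K E) {s t : E} (hs : s ^ 2 ∈ L) (ht2 : t ^ 2 ∈ L)
    (ht : t ∈ adjoin L {s}) : t ∈ L ∨ t * s ∈ L := by
  obtain ⟨u, hu, v, hv, rfl⟩ := exists_eq_add_mul_of_mem_adjoin_sqrt L hs ht
  by_cases hsL : s ∈ L
  · exact .inl (add_mem hu (mul_mem hv hsL))
  have h2uv : 2 * u * v = 0 := by
    by_contra hne
    have hc : 2 * u * v ∈ L := mul_mem (mul_mem (ofNat_mem L 2) hu) hv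
    have hcs : 2 * u * v * s ∈ L := by
      convert sub_mem (sub_mem ht2 (pow_mem hu 2)) (mul_mem (pow_mem hv 2) hs) using 1
      ring
    exact hsL (inv_mul_cancel_left₀ hne s ▸ mul_mem (inv_mem hc) hcs)
  rcases mul_eq_zero.1 h2uv with h | rfl
  · obtain rfl := (mul_eq_zero.1 h).resolve_left (NeZero.ne 2)
    exact .inr (by rw [zero_add, mul_assoc, ← sq]; exact mul_mem hv hs)
  · exact .inl (by simpa using hu)

theorem IntermediateField.exists_mem_mul_sq_of_mem_adjoin_finset [NeZero (2 : E)]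
    (G : Subgroup Kˣ) (T : Finset E) (hT : ∀ y ∈ T, ∃ g ∈ G, y ^ 2 = algebraMap K E (g : K))
    {t : E} {c : Kˣ} (ht : t ^ 2 = algebraMap K E c) (htT : t ∈ adjoin K (T : Set E)) :
    ∃ g ∈ G, ∃ x : Kˣ, c = g * x ^ 2 := by
  induction T using Finset.induction_on generalizing t c with
  | empty =>
    rw [Finset.coe_empty, adjoin_empty] at htT
    obtain ⟨b, rfl⟩ := mem_bot.1 htT
    have hb : b ^ 2 = c := (algebraMap K E).injective (by rw [map_pow, ht])
    have hb0 : b ≠ 0 := by rintro rfl; exact c.ne_zero (by simpa using hb.symm)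
    exact ⟨1, G.one_mem, Units.mk0 b hb0, by ext; simp [hb]⟩
  | insert a T _ ih =>
    obtain ⟨g₀, hg₀G, hg₀⟩ := hT a (Finset.mem_insert_self a T)
    have hT' := fun y hy ↦ hT y (Finset.mem_insert_of_mem hy)
    set L := adjoin K (T : Set E)
    have htL : t ∈ adjoin L {a} := by
      rwa [Finset.coe_insert, Set.insert_eq, Set.union_comm, ← adjoin_adjoin_left] at htT
    rcases mem_or_mul_mem_of_mem_adjoin_sqrt L (hg₀ ▸ L.algebraMap_mem _)
      (ht ▸ L.algebraMap_mem _) htL with htL | htaL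
    · exact ih hT' ht htL
    · obtain ⟨g, hg, x, hx⟩ := ih hT' (c := c * g₀)
        (by rw [mul_pow, ht, hg₀, Units.val_mul, map_mul]) htaL
      exact ⟨g * g₀⁻¹, G.mul_mem hg (G.inv_mem hg₀G), x,
        by rw [mul_right_comm, ← hx, mul_inv_cancel_right]⟩

variable (K E) in
def adjoinSqrt (G : Subgroup Kˣ) : IntermediateField K E :=
  IntermediateField.adjoin K {x : E | ∃ g ∈ G, x ^ 2 = algebraMap K E (g : K)}

theorem mem_adjoinSqrt_iff_of_sq_eq [NeZero (2 : E)] {G : Subgroup Kˣ} {t : E} {c : Kˣ}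
    (ht : t ^ 2 = algebraMap K E c) :
    t ∈ adjoinSqrt K E G ↔ ∃ g ∈ G, ∃ x : Kˣ, c = g * x ^ 2 := by
  constructor
  · intro h
    obtain ⟨T, hTS, htT⟩ := IntermediateField.exists_finset_of_mem_adjoin h
    exact IntermediateField.exists_mem_mul_sq_of_mem_adjoin_finset G T (fun y hy ↦ hTS hy) ht htT
  · rintro ⟨g, hg, x, rfl⟩
    have hx : algebraMap K E x ≠ 0 := by simp
    have hroot : t / algebraMap K E x ∈ adjoinSqrt K E G :=
      IntermediateField.subset_adjoin _ _ ⟨g, hg, by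
        rw [div_pow, ht, Units.val_mul, map_mul, Units.val_pow_eq_pow_val, map_pow,
          mul_div_cancel_right₀ _ (pow_ne_zero 2 hx)]⟩
    simpa [div_mul_cancel₀ _ hx] using mul_mem hroot ((adjoinSqrt K E G).algebraMap_mem x)

end FieldExtension

theorem Subgroup.exists_mem_neg_one_eq_mul_sq_iff {M : Type*} [CommGroup M] [HasDistribNeg M]
    (G : Subgroup M) : (∃ g ∈ G, ∃ x : M, -1 = g * x ^ 2) ↔ ∃ x : M, -(x ^ 2) ∈ G := by
  constructor
  · rintro ⟨g, hg, x, hx⟩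
    refine ⟨x⁻¹, ?_⟩
    rwa [inv_pow, ← neg_one_mul, hx, mul_inv_cancel_right]
  · rintro ⟨x, hx⟩
    exact ⟨_, hx, x⁻¹, by rw [inv_pow, neg_mul, mul_inv_cancel]⟩

theorem cycloKummer_two_eq_sup (K : Type) [Field K] (G : Subgroup Kˣ) (m : ℕ) :
    cycloKummer K G m 2 = cyclo K m ⊔ adjoinSqrt K (Kbar K) G :=
  IntermediateField.adjoin_union K

theorem stmt16_general (K : Type) [Field K] [NumberField K]
    (hK : ¬ ∃ ζ : K, IsPrimitiveRoot ζ 4)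
    (G : Subgroup Kˣ) :
    Module.finrank K
        ↥(IntermediateField.adjoin K
          {x : Kbar K | ∃ g ∈ G, x ^ 2 = algebraMap K (Kbar K) (g : K)}) *
      Module.finrank K ↥(cyclo K 4) =
    (if ∃ x : Kˣ, -(x ^ 2) ∈ G then 2 else 1) *
      Module.finrank K ↥(cycloKummer K G 4 2) := by
  obtain ⟨i, hi⟩ : ∃ i : Kbar K, i ^ 2 = -1 := IsAlgClosed.exists_pow_nat_eq _ two_pos
  have hi' : i ^ 2 = algebraMap K (Kbar K) (-1) := by rw [hi, map_neg, map_one]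
  set L := adjoinSqrt K (Kbar K) G
  have hiL : i ∈ L ↔ ∃ x : Kˣ, -(x ^ 2) ∈ G :=
    (mem_adjoinSqrt_iff_of_sq_eq (c := -1) (by simpa using hi')).trans
      G.exists_mem_neg_one_eq_mul_sq_iff
  have hKi : Module.finrank K K⟮i⟯ = 2 := finrank_adjoin_simple_eq_two hi' fun ⟨a, ha⟩ ↦
    hK ⟨a, isPrimitiveRoot_four_of_sq_eq_neg_one <|
      (algebraMap K (Kbar K)).injective (by rw [map_pow, ha, hi, map_neg, map_one])⟩
  change Module.finrank K L * _ = _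
  rw [cycloKummer_two_eq_sup, cyclo,
    IntermediateField.adjoin_pow_four_eq_one_eq_adjoin_simple hi, hKi]
  by_cases h : i ∈ L
  · rw [if_pos (hiL.1 h), sup_eq_right.2 (IntermediateField.adjoin_simple_le_iff.2 h), mul_comm]
  · have hLi : Module.finrank L L⟮i⟯ = 2 := finrank_adjoin_simple_eq_two (a := -1)
      (by rw [hi, map_neg, map_one]) (by simpa using h)
    rw [if_neg (hiL.not.1 h), one_mul, sup_comm,
      ← IntermediateField.restrictScalars_adjoin_eq_sup, ← hLi]
    exact Module.finrank_mul_finrank K L L⟮i⟯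

/-- if `ζ_4 ∉ K`, then `[K(√G):K] = e·[K(ζ_4)(√G):K(ζ_4)]` (stated after
multiplying both sides by `[K(ζ_4):K]`), where `e = 2` if `G` contains minus a square in
`Kˣ` and `e = 1` otherwise. -/
theorem stmt16 (K : Type) [Field K] [NumberField K]
    (hK : ¬ ∃ ζ : K, IsPrimitiveRoot ζ 4)
    (G : Subgroup Kˣ) (hfg : G.FG) :
    Module.finrank K
        ↥(IntermediateField.adjoin K
          {x : Kbar K | ∃ g ∈ G, x ^ 2 = algebraMap K (Kbar K) (g : K)}) *
      Module.finrank K ↥(cyclo K 4) =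
    (if ∃ x : Kˣ, -(x ^ 2) ∈ G then 2 else 1) *
      Module.finrank K ↥(cycloKummer K G 4 2) :=
  stmt16_general K hK G
end

section
/- Let K be a number field, ℓ a prime number, and G a finitely generated subgroup of K^×. For every integer n ≥ 1, the set of primes 𝔭 of K (excluding the finitely many primes where the reduction of G is not well-defined or contains 0) such that the ℓ-adic valuation of the size of the reduction of G modulo 𝔭 equals n has a natural density, equal to D_{K,ℓ}(G^{ℓ^n}) - D_{K,ℓ}(G^{ℓ^{n-1}}), where for a finitely generated subgroup H ⊂ K^×, D_{K,ℓ}(H) denotes the natural density of the set of primes 𝔭 such that the reduction of H modulo 𝔭 has size coprime to ℓ. -/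
/-! At a good prime `v` the reduction of `G` is a subgroup of the cyclic group `(𝓞 K ⧸ v)ˣ`, of
order `N` say, and the reduction of `G^m` is its image under `x ↦ x ^ m`, of order
`N / gcd(N, m)`. For `m = ℓ^j` this order is prime to `ℓ` exactly when `v_ℓ(N) ≤ j`, and `G^m`
has the same good primes as `G` because an element of `K` is a `v`-adic unit iff some nonzero
power of it is. Hence the primes with `v_ℓ(N) = n` are those counted by `D(G^{ℓ^n})` minus the
(smaller) set counted by `D(G^{ℓ^{n-1}})`, and natural densities of nested sets subtract. -/

open NumberField IsDedekindDomain IntermediateField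

set_option synthInstance.maxHeartbeats 1000000
set_option maxHeartbeats 1000000

theorem Nat.Prime.dvd_div_gcd_pow_iff {ℓ N : ℕ} (hℓ : ℓ.Prime) (hN : N ≠ 0) (j : ℕ) :
    ℓ ∣ N / N.gcd (ℓ ^ j) ↔ j < padicValNat ℓ N := by
  have hdiv : N / N.gcd (ℓ ^ j) ≠ 0 :=
    (Nat.div_ne_zero_iff_of_dvd (Nat.gcd_dvd_left _ _)).mpr ⟨hN, Nat.gcd_ne_zero_left hN⟩
  rw [hℓ.dvd_iff_one_le_factorization hdiv, Nat.factorization_div (Nat.gcd_dvd_left _ _),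
    Nat.factorization_gcd hN (pow_ne_zero _ hℓ.ne_zero), ← Nat.factorization_def _ hℓ]
  simp only [Nat.factorization_pow, Finsupp.coe_tsub, Pi.sub_apply, Finsupp.inf_apply,
    Finsupp.coe_smul, Pi.smul_apply, hℓ.factorization_self, smul_eq_mul, mul_one]
  omega

theorem Subgroup.card_map_powMonoidHom {M : Type*} [CommGroup M] (H : Subgroup M) [IsCyclic H]
    [Finite H] (m : ℕ) : Nat.card (H.map (powMonoidHom m)) = Nat.card H / (Nat.card H).gcd m := by
  rw [← IsCyclic.card_powMonoidHom_range, ← Subgroup.subgroupOf_map_powMonoidHom_eq_range]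
  refine Nat.card_congr (Subgroup.subgroupOfEquivOfLe ?_).toEquiv.symm
  rintro _ ⟨h, hh, rfl⟩
  exact H.pow_mem hh m

theorem IsDedekindDomain.HeightOneSpectrum.exists_mul_eq_notMem_iff_valuation_eq_one
    {R K : Type*} [CommRing R] [IsDedekindDomain R] [Field K] [Algebra R K] [IsFractionRing R K]
    (v : HeightOneSpectrum R) (g : K) :
    (∃ a b : R, a ∉ v.asIdeal ∧ b ∉ v.asIdeal ∧ g * algebraMap R K b = algebraMap R K a) ↔
      v.valuation K g = 1 := by
  constructor
  · rintro ⟨a, b, ha, hb, hab⟩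
    have := congrArg (v.valuation K) hab
    rwa [map_mul, (v.valuation_eq_one_iff_notMem).mpr ha, (v.valuation_eq_one_iff_notMem).mpr hb,
      mul_one] at this
  · intro hg
    obtain ⟨a, b, hab⟩ := v.exists_primeCompl_mul_eq_of_integer g hg.le
    refine ⟨a, b, ?_, b.prop, hab⟩
    rw [← v.valuation_eq_one_iff_notMem (K := K), ← hab, map_mul, hg, one_mul,
      v.valuation_eq_one_iff_notMem]
    exact b.prop

section Reduction

variable {R K : Type*} [CommRing R] [Field K] [Algebra R K]

-- `reductionSet K G v` unfolds to `{y | ∃ g ∈ G, IsReductionMod v.asIdeal (g : K) y}`.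
def IsReductionMod (P : Ideal R) (g : K) (y : R ⧸ P) : Prop :=
  ∃ a b : R, b ∉ P ∧ g * algebraMap R K b = algebraMap R K a ∧
    y * Ideal.Quotient.mk P b = Ideal.Quotient.mk P a

variable {P : Ideal R} {g g' : K} {y y' : R ⧸ P}

theorem exists_unit_isReductionMod_of_notMem [P.IsMaximal] {a b : R} (ha : a ∉ P) (hb : b ∉ P)
    (hab : g * algebraMap R K b = algebraMap R K a) : ∃ u : (R ⧸ P)ˣ, IsReductionMod P g u := by
  obtain ⟨c, hc⟩ := Ideal.Quotient.exists_inv (Ideal.Quotient.eq_zero_iff_mem.not.mpr hb)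
  obtain ⟨d, hd⟩ := Ideal.Quotient.exists_inv (Ideal.Quotient.eq_zero_iff_mem.not.mpr ha)
  refine ⟨⟨Ideal.Quotient.mk P a * c, Ideal.Quotient.mk P b * d, ?_, ?_⟩, a, b, hb, hab, ?_⟩
  · linear_combination Ideal.Quotient.mk P a * d * hc + hd
  · linear_combination Ideal.Quotient.mk P b * c * hd + hc
  · linear_combination Ideal.Quotient.mk P a * hc

variable [P.IsPrime]

theorem isReductionMod_one : IsReductionMod P (1 : K) 1 :=
  ⟨1, 1, P.one_notMem, by simp, by simp⟩

theorem IsReductionMod.mul (h : IsReductionMod P g y) (h' : IsReductionMod P g' y') :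
    IsReductionMod P (g * g') (y * y') := by
  obtain ⟨a, b, hb, hab, hy⟩ := h
  obtain ⟨a', b', hb', hab', hy'⟩ := h'
  refine ⟨a * a', b * b', ‹P.IsPrime›.mul_notMem hb hb', ?_, ?_⟩
  · rw [map_mul, map_mul, ← hab, ← hab']; ring
  · rw [map_mul, map_mul, ← hy, ← hy']; ring

theorem IsReductionMod.pow (h : IsReductionMod P g y) (m : ℕ) :
    IsReductionMod P (g ^ m) (y ^ m) := by
  obtain ⟨a, b, hb, hab, hy⟩ := h
  refine ⟨a ^ m, b ^ m, fun hbm => hb (‹P.IsPrime›.mem_of_pow_mem m hbm), ?_, ?_⟩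
  · rw [map_pow, map_pow, ← hab, mul_pow]
  · rw [map_pow, map_pow, ← hy, mul_pow]

variable [IsFractionRing R K]

theorem IsReductionMod.inv {u : (R ⧸ P)ˣ} (h : IsReductionMod P g u) :
    IsReductionMod P g⁻¹ ↑u⁻¹ := by
  obtain ⟨a, b, hb, hab, hu⟩ := h
  have ha : a ∉ P := by
    rw [← Ideal.Quotient.eq_zero_iff_mem, ← hu]
    exact mul_ne_zero u.ne_zero (Ideal.Quotient.eq_zero_iff_mem.not.mpr hb)
  have hg : g ≠ 0 := by
    rintro rfl
    rw [zero_mul, eq_comm, IsFractionRing.to_map_eq_zero_iff] at hab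
    exact ha (hab ▸ P.zero_mem)
  refine ⟨b, a, ha, ?_, ?_⟩
  · rw [← hab, inv_mul_cancel_left₀ hg]
  · rw [← hu, Units.inv_mul_cancel_left]

theorem IsReductionMod.unique (h : IsReductionMod P g y) (h' : IsReductionMod P g y') :
    y = y' := by
  obtain ⟨a, b, hb, hab, hy⟩ := h
  obtain ⟨a', b', hb', hab', hy'⟩ := h'
  have hR : a * b' = a' * b := IsFractionRing.injective R K <| by
    rw [map_mul, map_mul, ← hab, ← hab']; ring
  have hmk := congrArg (Ideal.Quotient.mk P) hR
  rw [map_mul, map_mul, ← hy, ← hy'] at hmk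
  have hb0 : Ideal.Quotient.mk P b * Ideal.Quotient.mk P b' ≠ 0 :=
    mul_ne_zero (Ideal.Quotient.eq_zero_iff_mem.not.mpr hb)
      (Ideal.Quotient.eq_zero_iff_mem.not.mpr hb')
  exact mul_right_cancel₀ hb0 (by linear_combination hmk)

variable (P) in
def reductionSubgroup (G : Subgroup Kˣ) : Subgroup (R ⧸ P)ˣ where
  carrier := {u | ∃ g ∈ G, IsReductionMod P (g : K) u}
  one_mem' := ⟨1, G.one_mem, isReductionMod_one⟩
  mul_mem' := by
    rintro u u' ⟨g, hg, h⟩ ⟨g', hg', h'⟩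
    exact ⟨g * g', G.mul_mem hg hg', h.mul h'⟩
  inv_mem' := by
    rintro u ⟨g, hg, h⟩
    exact ⟨g⁻¹, G.inv_mem hg, by simpa only [Units.val_inv_eq_inv_val] using h.inv⟩

end Reduction

section GoodPrime

variable {K : Type} [Field K] [NumberField K] {G : Subgroup Kˣ} {v : HeightOneSpectrum (𝓞 K)}

theorem goodPrime_iff_valuation_eq_one :
    GoodPrime K G v ↔ ∀ g ∈ G, v.valuation K (g : K) = 1 :=
  forall₂_congr fun g _ => v.exists_mul_eq_notMem_iff_valuation_eq_one (g : K)

theorem GoodPrime.map_powMonoidHom (hv : GoodPrime K G v) (m : ℕ) :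
    GoodPrime K (G.map (powMonoidHom m)) v := by
  rw [goodPrime_iff_valuation_eq_one] at hv ⊢
  rintro _ ⟨g, hg, rfl⟩
  rw [powMonoidHom_apply, Units.val_pow_eq_pow_val, map_pow, hv g hg, one_pow]

theorem goodPrime_map_powMonoidHom_iff {m : ℕ} (hm : m ≠ 0) :
    GoodPrime K (G.map (powMonoidHom m)) v ↔ GoodPrime K G v := by
  refine ⟨fun hv => ?_, fun hv => hv.map_powMonoidHom m⟩
  rw [goodPrime_iff_valuation_eq_one] at hv ⊢
  intro g hg
  have := hv _ ⟨g, hg, rfl⟩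
  rwa [powMonoidHom_apply, Units.val_pow_eq_pow_val, map_pow, pow_eq_one_iff_left hm] at this

theorem GoodPrime.exists_unit_isReductionMod (hv : GoodPrime K G v) {g : Kˣ} (hg : g ∈ G) :
    ∃ u : (𝓞 K ⧸ v.asIdeal)ˣ, IsReductionMod v.asIdeal (g : K) u :=
  let ⟨_, _, ha, hb, hab⟩ := hv g hg
  exists_unit_isReductionMod_of_notMem ha hb hab

theorem GoodPrime.reductionSet_eq (hv : GoodPrime K G v) :
    reductionSet K G v = Units.val '' reductionSubgroup v.asIdeal G := by
  ext y
  constructor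
  · rintro ⟨g, hg, hy⟩
    obtain ⟨u, hu⟩ := hv.exists_unit_isReductionMod hg
    exact ⟨u, ⟨g, hg, hu⟩, hu.unique hy⟩
  · rintro ⟨u, ⟨g, hg, hu⟩, rfl⟩
    exact ⟨g, hg, hu⟩

theorem GoodPrime.card_reductionSet (hv : GoodPrime K G v) :
    Nat.card (reductionSet K G v) = Nat.card (reductionSubgroup v.asIdeal G) := by
  rw [hv.reductionSet_eq, Nat.card_image_of_injective Units.val_injective, SetLike.coe_sort_coe]

theorem GoodPrime.reductionSubgroup_map_powMonoidHom (hv : GoodPrime K G v) (m : ℕ) :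
    reductionSubgroup v.asIdeal (G.map (powMonoidHom m)) =
      (reductionSubgroup v.asIdeal G).map (powMonoidHom m) := by
  ext y
  constructor
  · rintro ⟨_, ⟨g, hg, rfl⟩, hy⟩
    obtain ⟨u, hu⟩ := hv.exists_unit_isReductionMod hg
    refine ⟨u, ⟨g, hg, hu⟩, Units.val_injective ?_⟩
    simpa only [powMonoidHom_apply, Units.val_pow_eq_pow_val] using (hu.pow m).unique hy
  · rintro ⟨u, ⟨g, hg, hu⟩, rfl⟩
    exact ⟨g ^ m, ⟨g, hg, rfl⟩, by
      simpa only [powMonoidHom_apply, Units.val_pow_eq_pow_val] using hu.pow m⟩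

theorem mem_coprimeRed_map_pow_iff {ℓ : ℕ} (hℓ : ℓ.Prime) (j : ℕ) :
    v ∈ CoprimeRed K ℓ (G.map (powMonoidHom (ℓ ^ j))) ↔
      GoodPrime K G v ∧ padicValNat ℓ (Nat.card (reductionSet K G v)) ≤ j := by
  rw [CoprimeRed, Set.mem_ofPred_eq, goodPrime_map_powMonoidHom_iff (pow_ne_zero j hℓ.ne_zero)]
  refine and_congr_right fun hv => ?_
  rw [(hv.map_powMonoidHom _).card_reductionSet, hv.reductionSubgroup_map_powMonoidHom,
    Subgroup.card_map_powMonoidHom, hℓ.dvd_div_gcd_pow_iff Nat.card_pos.ne', hv.card_reductionSet,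
    not_lt]

end GoodPrime

section Density

variable {K : Type} [Field K] [NumberField K]

theorem finite_setOf_card_quotient_le (N : ℕ) :
    {v : HeightOneSpectrum (𝓞 K) | Nat.card (𝓞 K ⧸ v.asIdeal) ≤ N}.Finite := by
  refine ((Ideal.finite_setOfPred_absNorm_le N).preimage
    (fun v _ w _ h => HeightOneSpectrum.ext h)).subset fun v hv => ?_
  rwa [Set.mem_preimage, Set.mem_ofPred_eq, Ideal.absNorm_apply, Submodule.cardQuot_apply]

theorem HasDensity.diff {S₁ S₂ : Set (HeightOneSpectrum (𝓞 K))} {D₁ D₂ : ℝ}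
    (h₁ : HasDensity K S₁ D₁) (h₂ : HasDensity K S₂ D₂) (h : S₂ ⊆ S₁) :
    HasDensity K (S₁ \ S₂) (D₁ - D₂) := by
  refine (h₁.sub h₂).congr fun N => ?_
  set A := {v : HeightOneSpectrum (𝓞 K) | Nat.card (𝓞 K ⧸ v.asIdeal) ≤ N}
  have hcard (S : Set (HeightOneSpectrum (𝓞 K))) :
      Nat.card {v // v ∈ S ∧ Nat.card (𝓞 K ⧸ v.asIdeal) ≤ N} = (S ∩ A).ncard :=
    Nat.card_coe_set_eq (S ∩ A)
  have hsub : S₂ ∩ A ⊆ S₁ ∩ A := Set.inter_subset_inter_left A h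
  have hfin : (S₁ ∩ A).Finite := (finite_setOf_card_quotient_le N).inter_of_right S₁
  rw [hcard, hcard, hcard, Set.inter_sdiff_distrib_right, Set.ncard_sdiff hsub (hfin.subset hsub),
    Nat.cast_sub (Set.ncard_le_ncard hsub hfin), sub_div]

end Density

theorem stmt19_general (K : Type) [Field K] [NumberField K] (ℓ : ℕ) (hℓ : ℓ.Prime)
    (G : Subgroup Kˣ) (n : ℕ) (hn : 1 ≤ n)
    (D1 D2 : ℝ)
    (hD1 : HasDensity K
      (CoprimeRed K ℓ (Subgroup.map (powMonoidHom (ℓ ^ n) : Kˣ →* Kˣ) G)) D1)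
    (hD2 : HasDensity K
      (CoprimeRed K ℓ (Subgroup.map (powMonoidHom (ℓ ^ (n - 1)) : Kˣ →* Kˣ) G)) D2) :
    HasDensity K
      {v | GoodPrime K G v ∧ padicValNat ℓ (Nat.card (reductionSet K G v)) = n}
      (D1 - D2) := by
  have hset : {v | GoodPrime K G v ∧ padicValNat ℓ (Nat.card (reductionSet K G v)) = n} =
      CoprimeRed K ℓ (G.map (powMonoidHom (ℓ ^ n))) \
        CoprimeRed K ℓ (G.map (powMonoidHom (ℓ ^ (n - 1)))) := by
    ext v
    rw [Set.mem_sdiff, mem_coprimeRed_map_pow_iff hℓ, mem_coprimeRed_map_pow_iff hℓ]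
    constructor
    · rintro ⟨hv, hval⟩
      exact ⟨⟨hv, hval.le⟩, fun ⟨_, hle⟩ => by omega⟩
    · rintro ⟨⟨hv, hle⟩, hgt⟩
      exact ⟨hv, by have := not_and.mp hgt hv; omega⟩
  rw [hset]
  refine hD1.diff hD2 fun v hv => ?_
  rw [mem_coprimeRed_map_pow_iff hℓ] at hv ⊢
  exact ⟨hv.1, hv.2.trans (Nat.sub_le n 1)⟩

/-- for `n ≥ 1`, the set of primes of `K` at which the size of the
reduction of `G` has `ℓ`-adic valuation exactly `n` has a natural density, equal to
`D_{K,ℓ}(G^{ℓ^n}) - D_{K,ℓ}(G^{ℓ^{n-1}})`. -/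
theorem stmt19 (K : Type) [Field K] [NumberField K] (ℓ : ℕ) (hℓ : ℓ.Prime)
    (G : Subgroup Kˣ) (hfg : G.FG) (n : ℕ) (hn : 1 ≤ n)
    (D1 D2 : ℝ)
    (hD1 : HasDensity K
      (CoprimeRed K ℓ (Subgroup.map (powMonoidHom (ℓ ^ n) : Kˣ →* Kˣ) G)) D1)
    (hD2 : HasDensity K
      (CoprimeRed K ℓ (Subgroup.map (powMonoidHom (ℓ ^ (n - 1)) : Kˣ →* Kˣ) G)) D2) :
    HasDensity K
      {v | GoodPrime K G v ∧ padicValNat ℓ (Nat.card (reductionSet K G v)) = n}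
      (D1 - D2) :=
  stmt19_general K ℓ hℓ G n hn D1 D2 hD1 hD2
end
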